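/- arXiv:1208.1720 — 10 statements merged into one kernel-verified Lean document; each statement's English description precedes it below -/
import Mathlib

section
/- α(X,Y) = 1/4 if and only if there exist subsets S ⊆ 𝔸 and T ⊆ 𝔹 such that P_μ(S) = 1/2, P_ν(T) = 1/2, and P_θ(S×T) = 0. -/
open Finset

/-- Joint probability of the rectangle `S × T` under the joint distribution `θ`. -/
noncomputable def Pjoint {n m : ℕ} (θ : Fin n → Fin m → ℝ)
    (S : Finset (Fin n)) (T : Finset (Fin m)) : ℝ :=
  ∑ i ∈ S, ∑ j ∈ T, θ i j

/-- Marginal distribution of `X`. -/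
noncomputable def margX {n m : ℕ} (θ : Fin n → Fin m → ℝ) (i : Fin n) : ℝ := ∑ j, θ i j

/-- Marginal distribution of `Y`. -/
noncomputable def margY {n m : ℕ} (θ : Fin n → Fin m → ℝ) (j : Fin m) : ℝ := ∑ i, θ i j

/-- Marginal probability of `S` under the first marginal. -/
noncomputable def PX {n m : ℕ} (θ : Fin n → Fin m → ℝ) (S : Finset (Fin n)) : ℝ :=
  ∑ i ∈ S, margX θ i

/-- Marginal probability of `T` under the second marginal. -/
noncomputable def PY {n m : ℕ} (θ : Fin n → Fin m → ℝ) (T : Finset (Fin m)) : ℝ :=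
  ∑ j ∈ T, margY θ j

/-- The alpha-mixing coefficient:
`α(X,Y) = max_{S,T} |P_θ(S×T) − P_μ(S)·P_ν(T)|`. -/
noncomputable def alpha {n m : ℕ} (θ : Fin n → Fin m → ℝ) : ℝ :=
  sSup {x : ℝ | ∃ (S : Finset (Fin n)) (T : Finset (Fin m)),
    x = |Pjoint θ S T - PX θ S * PY θ T|}

section Aux
variable {n m : ℕ} (θ : Fin n → Fin m → ℝ)

lemma Pjoint_nonneg' (hnn : ∀ i j, 0 ≤ θ i j) (S : Finset (Fin n)) (T : Finset (Fin m)) :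
    0 ≤ Pjoint θ S T :=
  Finset.sum_nonneg fun i _ => Finset.sum_nonneg fun j _ => hnn i j

lemma PX_eq' (S : Finset (Fin n)) : PX θ S = Pjoint θ S univ := rfl

lemma PY_eq' (T : Finset (Fin m)) : PY θ T = Pjoint θ univ T := Finset.sum_comm

lemma Pjoint_compl_right' (S : Finset (Fin n)) (T : Finset (Fin m)) :
    Pjoint θ S Tᶜ = PX θ S - Pjoint θ S T := by
  have : Pjoint θ S T + Pjoint θ S Tᶜ = PX θ S := by
    unfold Pjoint PX margX
    rw [← Finset.sum_add_distrib]
    exact Finset.sum_congr rfl fun i _ => Finset.sum_add_sum_compl T _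
  linarith

lemma Pjoint_mono_left' (hnn : ∀ i j, 0 ≤ θ i j) (S : Finset (Fin n)) (T : Finset (Fin m)) :
    Pjoint θ S T ≤ Pjoint θ univ T :=
  Finset.sum_le_sum_of_subset_of_nonneg (subset_univ S)
    (fun i _ _ => Finset.sum_nonneg fun j _ => hnn i j)

lemma Pjoint_mono_right' (hnn : ∀ i j, 0 ≤ θ i j) (S : Finset (Fin n)) (T : Finset (Fin m)) :
    Pjoint θ S T ≤ Pjoint θ S univ :=
  Finset.sum_le_sum fun i _ => Finset.sum_le_sum_of_subset_of_nonneg (subset_univ T)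
    (fun j _ _ => hnn i j)

/-- Bundle of the basic probabilistic inequalities. -/
lemma facts' (hnn : ∀ i j, 0 ≤ θ i j) (hsum : ∑ i, ∑ j, θ i j = 1)
    (S : Finset (Fin n)) (T : Finset (Fin m)) :
    0 ≤ Pjoint θ S T ∧ Pjoint θ S T ≤ PX θ S ∧ Pjoint θ S T ≤ PY θ T ∧
    PX θ S ≤ 1 ∧ PY θ T ≤ 1 ∧ 0 ≤ PX θ S ∧ 0 ≤ PY θ T ∧
    PX θ S + PY θ T - 1 ≤ Pjoint θ S T := by
  have huniv : Pjoint θ univ univ = 1 := hsum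
  have h1 : 0 ≤ Pjoint θ S T := Pjoint_nonneg' θ hnn S T
  have h2 : Pjoint θ S T ≤ PX θ S := by rw [PX_eq']; exact Pjoint_mono_right' θ hnn S T
  have h3 : Pjoint θ S T ≤ PY θ T := by rw [PY_eq']; exact Pjoint_mono_left' θ hnn S T
  have h4 : PX θ S ≤ 1 := by
    rw [PX_eq']; rw [← huniv]; exact Pjoint_mono_left' θ hnn S univ
  have h5 : PY θ T ≤ 1 := by
    rw [PY_eq']; rw [← huniv]; exact Pjoint_mono_right' θ hnn univ T
  have h6 : 0 ≤ PX θ S := le_trans h1 h2 |>.trans_eq rfl |> fun _ => le_trans h1 h2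
  have h6' : 0 ≤ PX θ S := by rw [PX_eq']; exact Pjoint_nonneg' θ hnn S univ
  have h7 : 0 ≤ PY θ T := by rw [PY_eq']; exact Pjoint_nonneg' θ hnn univ T
  have hPYc : PY θ Tᶜ = 1 - PY θ T := by
    rw [PY_eq', PY_eq', Pjoint_compl_right' θ univ T, PX_eq', huniv]
  have h8 : PX θ S + PY θ T - 1 ≤ Pjoint θ S T := by
    have := Pjoint_compl_right' θ S T
    have hle : Pjoint θ S Tᶜ ≤ PY θ Tᶜ := by
      rw [PY_eq']; exact Pjoint_mono_left' θ hnn S Tᶜ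
    rw [hPYc] at hle
    linarith
  exact ⟨h1, h2, h3, h4, h5, h6', h7, h8⟩

lemma abs_bound' (p q r : ℝ) (hr0 : 0 ≤ r) (hrp : r ≤ p) (hrq : r ≤ q)
    (hp1 : p ≤ 1) (hq1 : q ≤ 1) (hp0 : 0 ≤ p) (hq0 : 0 ≤ q)
    (hlb : p + q - 1 ≤ r) : |r - p * q| ≤ 1 / 4 := by
  rw [abs_le]
  constructor
  · rcases le_total (p + q) 1 with h | h
    · nlinarith [sq_nonneg (p - q), sq_nonneg (p + q - 1)]
    · nlinarith [sq_nonneg (p - q), sq_nonneg (p + q - 1)]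
  · nlinarith [sq_nonneg (2*r - 1), mul_nonneg (sub_nonneg.2 hrq) hr0,
      mul_nonneg (sub_nonneg.2 hrp) (sub_nonneg.2 hrq)]

lemma eq_case_pos' (p q r : ℝ) (hr0 : 0 ≤ r) (hrp : r ≤ p) (hrq : r ≤ q)
    (hp1 : p ≤ 1) (hq1 : q ≤ 1)
    (heq : r - p * q = 1/4) : p = 1/2 ∧ q = 1/2 ∧ r = 1/2 := by
  have hr : r = 1/2 := by
    nlinarith [sq_nonneg (2*r - 1), mul_nonneg (sub_nonneg.2 hrq) hr0,
      mul_nonneg (sub_nonneg.2 hrp) (sub_nonneg.2 hrq)]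
  subst hr
  exact ⟨by nlinarith, by nlinarith, rfl⟩

lemma eq_case_neg' (p q r : ℝ) (hr0 : 0 ≤ r) (hp1 : p ≤ 1) (hq1 : q ≤ 1)
    (hp0 : 0 ≤ p) (hq0 : 0 ≤ q) (hlb : p + q - 1 ≤ r)
    (heq : p * q - r = 1/4) : p = 1/2 ∧ q = 1/2 ∧ r = 0 := by
  have h1 : 1/4 ≤ p * q := by linarith
  have h2 : 1/4 ≤ (1 - p) * (1 - q) := by nlinarith
  have hp : p = 1/2 := by nlinarith [sq_nonneg (p - q), sq_nonneg (p + q - 1)]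
  have hq : q = 1/2 := by nlinarith [sq_nonneg (p - q), sq_nonneg (p + q - 1)]
  refine ⟨hp, hq, by rw [hp, hq] at heq; linarith⟩

end Aux

/-- `α(X,Y) = 1/4` iff there exist `S ⊆ 𝔸`, `T ⊆ 𝔹` with `P_μ(S) = 1/2`, `P_ν(T) = 1/2`
and `P_θ(S×T) = 0`. -/
theorem alpha_eq_quarter_iff {n m : ℕ} (θ : Fin n → Fin m → ℝ)
    (hnn : ∀ i j, 0 ≤ θ i j) (hsum : ∑ i, ∑ j, θ i j = 1) :
    alpha θ = 1 / 4 ↔ ∃ (S : Finset (Fin n)) (T : Finset (Fin m)),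
      PX θ S = 1 / 2 ∧ PY θ T = 1 / 2 ∧ Pjoint θ S T = 0 := by
  set A : Set ℝ := {x : ℝ | ∃ (S : Finset (Fin n)) (T : Finset (Fin m)),
    x = |Pjoint θ S T - PX θ S * PY θ T|} with hA
  have hbound : ∀ (S : Finset (Fin n)) (T : Finset (Fin m)),
      |Pjoint θ S T - PX θ S * PY θ T| ≤ 1/4 := by
    intro S T
    obtain ⟨h1, h2, h3, h4, h5, h6, h7, h8⟩ := facts' θ hnn hsum S T
    exact abs_bound' (PX θ S) (PY θ T) (Pjoint θ S T) h1 h2 h3 h4 h5 h6 h7 h8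
  have hne : A.Nonempty := ⟨|Pjoint θ ∅ ∅ - PX θ ∅ * PY θ ∅|, ∅, ∅, rfl⟩
  have hbdd : BddAbove A := ⟨1/4, by rintro x ⟨S, T, rfl⟩; exact hbound S T⟩
  have hfin : A.Finite := by
    have : A = Set.range (fun p : Finset (Fin n) × Finset (Fin m) =>
        |Pjoint θ p.1 p.2 - PX θ p.1 * PY θ p.2|) := by
      ext x
      constructor
      · rintro ⟨S, T, rfl⟩; exact ⟨(S, T), rfl⟩
      · rintro ⟨⟨S, T⟩, rfl⟩; exact ⟨S, T, rfl⟩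
    rw [this]
    exact Set.finite_range _
  constructor
  · intro h
    have hmem : sSup A ∈ A := hne.csSup_mem hfin
    rw [show alpha θ = sSup A from rfl] at h
    rw [h] at hmem
    obtain ⟨S, T, habs⟩ := hmem
    obtain ⟨h1, h2, h3, h4, h5, h6, h7, h8⟩ := facts' θ hnn hsum S T
    rcases (abs_eq (by norm_num : (0:ℝ) ≤ 1/4)).1 habs.symm with hpos | hneg
    · -- Pjoint - PX*PY = 1/4 : use S, Tᶜ
      obtain ⟨hp, hq, hr⟩ := eq_case_pos' (PX θ S) (PY θ T) (Pjoint θ S T) h1 h2 h3 h4 h5 hpos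
      refine ⟨S, Tᶜ, hp, ?_, ?_⟩
      · have hPYc : PY θ Tᶜ = 1 - PY θ T := by
          rw [PY_eq', PY_eq', Pjoint_compl_right' θ univ T, PX_eq']
          rw [show Pjoint θ univ univ = 1 from hsum]
        rw [hPYc, hq]; norm_num
      · rw [Pjoint_compl_right' θ S T, hp, hr]; norm_num
    · obtain ⟨hp, hq, hr⟩ := eq_case_neg' (PX θ S) (PY θ T) (Pjoint θ S T) h1 h4 h5 h6 h7 h8
        (by linarith)
      exact ⟨S, T, hp, hq, hr⟩
  · rintro ⟨S, T, hp, hq, hr⟩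
    have hmem : (1/4 : ℝ) ∈ A := ⟨S, T, by rw [hp, hq, hr]; rw [show (0:ℝ) - 1/2*(1/2) = -(1/4) by norm_num, abs_neg, abs_of_nonneg]; norm_num⟩
    exact le_antisymm (csSup_le hne (by rintro x ⟨S', T', rfl⟩; exact hbound S' T'))
      (le_csSup hbdd hmem)
end

section
/- Let a_1,…,a_m be nonnegative real numbers with Σ_{i=1}^m a_i = 1, and define the joint distribution θ on {1,…,m}×{1,…,m} by θ_{ij} = a_i if i = j and θ_{ij} = 0 otherwise (so both marginals equal a and P(X = Y) = 1). Then the alpha-mixing coefficient of θ equals 1/4 if and only if there exists a subset I ⊆ {1,…,m} with Σ_{i∈I} a_i = 1/2. -/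
open Finset

lemma half_of_abs_eq_quarter (u x y : ℝ) (hu : 0 ≤ u) (h1 : u ≤ x) (h2 : u ≤ y)
    (h3 : x + y - 1 ≤ u) (hx0 : 0 ≤ x) (hx1 : x ≤ 1) (hy0 : 0 ≤ y) (hy1 : y ≤ 1)
    (hST : (1:ℝ)/4 = |u - x * y|) : x = 1/2 := by
  have hsq : (x - 1/2)^2 ≤ 0 := by
    rcases abs_cases (u - x * y) with ⟨heq, _⟩ | ⟨heq, _⟩
    · have hv : u - x * y = 1/4 := by linarith [hST, heq]
      have hA : 1/4 ≤ x * (1 - y) := by nlinarith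
      have hB : 1/4 ≤ y * (1 - x) := by nlinarith
      have hAB : 1/16 ≤ (x * (1 - y)) * (y * (1 - x)) := by nlinarith
      nlinarith [sq_nonneg (y - 1/2), mul_nonneg hx0 (sub_nonneg.2 hx1)]
    · have hv : x * y - u = 1/4 := by linarith [hST, heq]
      have hA : 1/4 ≤ x * y := by nlinarith
      have hB : 1/4 ≤ (1 - x) * (1 - y) := by nlinarith
      have hAB : 1/16 ≤ (x * y) * ((1 - x) * (1 - y)) := by nlinarith
      nlinarith [sq_nonneg (y - 1/2), mul_nonneg hx0 (sub_nonneg.2 hx1)]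
  nlinarith [sq_nonneg (x - 1/2)]

lemma abs_le_quarter (u x y : ℝ) (hu : 0 ≤ u) (h1 : u ≤ x) (h2 : u ≤ y)
    (h3 : x + y - 1 ≤ u) (hx0 : 0 ≤ x) (hx1 : x ≤ 1) (hy0 : 0 ≤ y) (hy1 : y ≤ 1) :
    |u - x * y| ≤ 1/4 := by
  rw [abs_le]
  constructor
  · nlinarith [sq_nonneg (x + y - 1), sq_nonneg (x - y)]
  · nlinarith [sq_nonneg (x + y - 1), sq_nonneg (x - y)]

/-- Reduction of the normalized partition problem: for the diagonal joint distribution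
`θ_{ij} = a_i δ_{ij}`, the alpha-mixing coefficient equals `1/4` iff the `a_i` admit a subset
summing to `1/2`. -/
theorem alpha_diag_eq_quarter_iff_partition {m : ℕ} (a : Fin m → ℝ)
    (hnn : ∀ i, 0 ≤ a i) (hsum : ∑ i, a i = 1) :
    alpha (fun i j : Fin m => if i = j then a i else 0) = 1 / 4 ↔
      ∃ I : Finset (Fin m), ∑ i ∈ I, a i = 1 / 2 := by
  set θ : Fin m → Fin m → ℝ := fun i j => if i = j then a i else 0 with hθ
  have hmX : ∀ i, margX θ i = a i := by
    intro i; simp [margX, θ]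
  have hmY : ∀ j, margY θ j = a j := by
    intro j
    simp only [margY, θ]
    rw [Finset.sum_ite_eq' Finset.univ j a]
    simp
  have hPX : ∀ S : Finset (Fin m), PX θ S = ∑ i ∈ S, a i := by
    intro S; simp [PX, hmX]
  have hPY : ∀ T : Finset (Fin m), PY θ T = ∑ j ∈ T, a j := by
    intro T; simp [PY, hmY]
  have hPj : ∀ S T : Finset (Fin m), Pjoint θ S T = ∑ i ∈ S ∩ T, a i := by
    intro S T
    simp only [Pjoint, θ]
    have : ∀ i : Fin m, (∑ j ∈ T, if i = j then a i else 0) = if i ∈ T then a i else 0 := by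
      intro i
      rw [Finset.sum_ite_eq T i (fun _ => a i)]
    simp only [this]
    rw [Finset.sum_ite_mem]
  -- basic inequalities
  have hsub : ∀ S : Finset (Fin m), ∑ i ∈ S, a i ≤ 1 := by
    intro S
    rw [← hsum]
    exact Finset.sum_le_sum_of_subset_of_nonneg (Finset.subset_univ S)
      (fun i _ _ => hnn i)
  have hpos : ∀ S : Finset (Fin m), 0 ≤ ∑ i ∈ S, a i :=
    fun S => Finset.sum_nonneg (fun i _ => hnn i)
  have hfacts : ∀ S T : Finset (Fin m),
      (∑ i ∈ S ∩ T, a i) ≤ ∑ i ∈ S, a i ∧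
      (∑ i ∈ S ∩ T, a i) ≤ ∑ i ∈ T, a i ∧
      (∑ i ∈ S, a i) + (∑ i ∈ T, a i) - 1 ≤ ∑ i ∈ S ∩ T, a i := by
    intro S T
    refine ⟨Finset.sum_le_sum_of_subset_of_nonneg (Finset.inter_subset_left)
        (fun i _ _ => hnn i),
      Finset.sum_le_sum_of_subset_of_nonneg (Finset.inter_subset_right)
        (fun i _ _ => hnn i), ?_⟩
    have h1 : (∑ i ∈ S ∪ T, a i) + (∑ i ∈ S ∩ T, a i)
        = (∑ i ∈ S, a i) + (∑ i ∈ T, a i) := Finset.sum_union_inter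
    have h2 : (∑ i ∈ S ∪ T, a i) ≤ 1 := hsub _
    linarith
  -- the universal bound
  have hbound : ∀ S T : Finset (Fin m),
      |Pjoint θ S T - PX θ S * PY θ T| ≤ 1/4 := by
    intro S T
    rw [hPj, hPX, hPY]
    obtain ⟨h1, h2, h3⟩ := hfacts S T
    exact abs_le_quarter _ _ _ (hpos _) h1 h2 h3 (hpos S) (hsub S) (hpos T) (hsub T)
  set Sset : Set ℝ := {x : ℝ | ∃ (S : Finset (Fin m)) (T : Finset (Fin m)),
    x = |Pjoint θ S T - PX θ S * PY θ T|} with hSset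
  have hne : Sset.Nonempty := ⟨_, ∅, ∅, rfl⟩
  have hfin : Sset.Finite := by
    have : Sset ⊆ Set.range (fun p : Finset (Fin m) × Finset (Fin m) =>
        |Pjoint θ p.1 p.2 - PX θ p.1 * PY θ p.2|) := by
      rintro x ⟨S, T, rfl⟩
      exact ⟨(S, T), rfl⟩
    exact (Set.finite_range _).subset this
  have hbdd : BddAbove Sset := hfin.bddAbove
  have halpha : alpha θ = sSup Sset := rfl
  constructor
  · intro h
    have hmem : sSup Sset ∈ Sset := hne.csSup_mem hfin
    rw [halpha] at h
    rw [h] at hmem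
    obtain ⟨S, T, hST⟩ := hmem
    rw [hPj, hPX, hPY] at hST
    obtain ⟨h1, h2, h3⟩ := hfacts S T
    exact ⟨S, half_of_abs_eq_quarter _ _ _ (hpos _) h1 h2 h3 (hpos S) (hsub S)
      (hpos T) (hsub T) hST⟩
  · rintro ⟨I, hI⟩
    have hmem : (1/4 : ℝ) ∈ Sset := by
      refine ⟨I, I, ?_⟩
      rw [hPj, hPX, hPY, Finset.inter_self, hI]
      rw [abs_of_nonneg (by norm_num)]
      norm_num
    rw [halpha]
    apply le_antisymm
    · exact Real.sSup_le (fun x hx => by obtain ⟨S, T, rfl⟩ := hx; exact hbound S T)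
        (by norm_num)
    · exact le_csSup hbdd hmem
end

section
/- The alpha-mixing coefficient equals one quarter of the (∞,1)-induced norm of Γ: α(X,Y) = 0.25 · ‖Γ‖_{∞,1}. -/
open Finset

/-- The `(∞,1)`-induced norm of a matrix:
`‖Γ‖_{∞,1} = max_{‖v‖_∞ ≤ 1} ‖Γv‖₁`. -/
noncomputable def normInftyOne {n m : ℕ} (Γ : Matrix (Fin n) (Fin m) ℝ) : ℝ :=
  sSup {x : ℝ | ∃ v : Fin m → ℝ, (∀ j, |v j| ≤ 1) ∧ x = ∑ i, |∑ j, Γ i j * v j|}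

/-!
Write `Γ = θ - μνᵀ`. Since the marginals are probability vectors, `Γ` has zero row and column
sums, and `P_θ(S × T) - P_μ(S) P_ν(T)` is the block sum `Γ(S × T)`. For a sign vector
`ε_S = 𝟙_S - 𝟙_{Sᶜ}` the zero line sums give `ε_Sᵀ Γ ε_T = 4 Γ(S × T)`. Hence the sign vector
`ε_T` shows `‖Γ‖_{∞,1} ≥ 4 |Γ(S × T)|`. Conversely, for `‖v‖_∞ ≤ 1` choose `S` from the signs
of `Γv` and then `T` from the signs of `ε_Sᵀ Γ`: then `‖Γv‖₁ = ε_Sᵀ Γ v ≤ ‖ε_Sᵀ Γ‖₁ = 4 Γ(S × T)`.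
-/

open Matrix

lemma abs_dotProduct_le_sum_abs {ι : Type*} [Fintype ι] {v : ι → ℝ} (hv : ∀ i, |v i| ≤ 1)
    (f : ι → ℝ) : |v ⬝ᵥ f| ≤ ∑ i, |f i| :=
  (abs_sum_le_sum_abs _ _).trans <| sum_le_sum fun i _ => by
    rw [abs_mul]; exact mul_le_of_le_one_left (abs_nonneg _) (hv i)

section SignVector

variable {ι : Type*} [DecidableEq ι]

def signVec (s : Finset ι) (i : ι) : ℝ := if i ∈ s then 1 else -1

lemma abs_signVec (s : Finset ι) (i : ι) : |signVec s i| = 1 := by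
  unfold signVec; split_ifs <;> norm_num

variable [Fintype ι]

lemma sum_abs_eq_signVec_dotProduct (f : ι → ℝ) :
    ∑ i, |f i| = signVec {i | 0 ≤ f i} ⬝ᵥ f := by
  refine sum_congr rfl fun i _ => ?_
  by_cases hi : 0 ≤ f i
  · simp [signVec, hi, abs_of_nonneg hi]
  · simp [signVec, hi, abs_of_neg (not_le.mp hi)]

lemma signVec_dotProduct_of_sum_eq_zero {f : ι → ℝ} (hf : ∑ i, f i = 0) (s : Finset ι) :
    signVec s ⬝ᵥ f = 2 * ∑ i ∈ s, f i := by
  have hpoint : ∀ i, signVec s i * f i = 2 * (if i ∈ s then f i else 0) - f i := by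
    intro i; unfold signVec; split_ifs <;> ring
  simp only [dotProduct, hpoint, sum_sub_distrib, ← mul_sum, sum_ite_mem, univ_inter, hf,
    sub_zero]

end SignVector

section ZeroLineSums

variable {ι κ : Type*} [Fintype ι] [Fintype κ] [DecidableEq ι] [DecidableEq κ]

def blockSum (A : Matrix ι κ ℝ) (S : Finset ι) (T : Finset κ) : ℝ :=
  ∑ i ∈ S, ∑ j ∈ T, A i j

variable {A : Matrix ι κ ℝ} (hrow : ∀ i, ∑ j, A i j = 0) (hcol : ∀ j, ∑ i, A i j = 0)
include hrow hcol

lemma signVec_dotProduct_mulVec_signVec (S : Finset ι) (T : Finset κ) :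
    signVec S ⬝ᵥ (A *ᵥ signVec T) = 4 * blockSum A S T := by
  have hA : A *ᵥ signVec T = fun i => 2 * ∑ j ∈ T, A i j := by
    ext i
    rw [mulVec, dotProduct_comm, signVec_dotProduct_of_sum_eq_zero (hrow i)]
  have hcolT : ∑ i, 2 * ∑ j ∈ T, A i j = 0 := by
    have hT : ∑ i, ∑ j ∈ T, A i j = 0 := sum_comm.trans (sum_eq_zero fun j _ => hcol j)
    rw [← mul_sum, hT, mul_zero]
  rw [hA, signVec_dotProduct_of_sum_eq_zero hcolT, blockSum, ← mul_sum, ← mul_assoc]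
  norm_num

lemma four_mul_abs_blockSum_le (S : Finset ι) (T : Finset κ) :
    4 * |blockSum A S T| ≤ ∑ i, |(A *ᵥ signVec T) i| := by
  have h4 : (4 : ℝ) = |4| := by norm_num
  rw [h4, ← abs_mul, ← signVec_dotProduct_mulVec_signVec hrow hcol]
  exact abs_dotProduct_le_sum_abs (fun i => (abs_signVec S i).le) _

lemma exists_sum_abs_mulVec_le {v : κ → ℝ} (hv : ∀ j, |v j| ≤ 1) :
    ∃ S T, ∑ i, |(A *ᵥ v) i| ≤ 4 * |blockSum A S T| := by
  set S : Finset ι := {i | 0 ≤ (A *ᵥ v) i}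
  set T : Finset κ := {j | 0 ≤ (signVec S ᵥ* A) j}
  refine ⟨S, T, ?_⟩
  calc ∑ i, |(A *ᵥ v) i| = (signVec S ᵥ* A) ⬝ᵥ v := by
        rw [sum_abs_eq_signVec_dotProduct, dotProduct_mulVec]
    _ ≤ ∑ j, |(signVec S ᵥ* A) j| := by
        rw [dotProduct_comm]; exact le_of_abs_le (abs_dotProduct_le_sum_abs hv _)
    _ = signVec S ⬝ᵥ (A *ᵥ signVec T) := by
        rw [sum_abs_eq_signVec_dotProduct, dotProduct_comm, dotProduct_mulVec]
    _ ≤ 4 * |blockSum A S T| := by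
        rw [signVec_dotProduct_mulVec_signVec hrow hcol]
        exact mul_le_mul_of_nonneg_left (le_abs_self _) (by norm_num)

theorem sSup_sum_abs_mulVec_eq_four_mul_sSup_abs_blockSum :
    sSup {x | ∃ v : κ → ℝ, (∀ j, |v j| ≤ 1) ∧ x = ∑ i, |∑ j, A i j * v j|} =
      4 * sSup {x | ∃ S T, x = |blockSum A S T|} := by
  rw [← smul_eq_mul, ← Real.sSup_smul_of_nonneg (by norm_num)]
  refine csSup_eq_csSup_of_forall_exists_le ?_ ?_
  · rintro _ ⟨v, hv, rfl⟩
    obtain ⟨S, T, hle⟩ := exists_sum_abs_mulVec_le hrow hcol hv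
    exact ⟨_, Set.smul_mem_smul_set ⟨S, T, rfl⟩, hle⟩
  · rintro _ ⟨_, ⟨S, T, rfl⟩, rfl⟩
    exact ⟨_, ⟨signVec T, fun j => (abs_signVec T j).le, rfl⟩,
      four_mul_abs_blockSum_le hrow hcol S T⟩

end ZeroLineSums

theorem alpha_eq_quarter_normInftyOne_general {n m : ℕ} (θ : Fin n → Fin m → ℝ)
    (hsum : ∑ i, ∑ j, θ i j = 1) :
    alpha θ = 0.25 * normInftyOne (Matrix.of fun i j => θ i j - margX θ i * margY θ j) := by
  set Γ : Matrix (Fin n) (Fin m) ℝ := Matrix.of fun i j => θ i j - margX θ i * margY θ j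
  have hν : ∑ j, margY θ j = 1 := by rw [← hsum, sum_comm]; rfl
  have hrow : ∀ i, ∑ j, Γ i j = 0 := fun i => by
    simp [Γ, sum_sub_distrib, ← mul_sum, hν, margX]
  have hcol : ∀ j, ∑ i, Γ i j = 0 := fun j => by
    simp [Γ, sum_sub_distrib, ← sum_mul, hsum, margY, margX]
  have hblock : ∀ S T, Pjoint θ S T - PX θ S * PY θ T = blockSum Γ S T := fun S T => by
    simp only [Pjoint, PX, PY, blockSum, Γ, of_apply, sum_mul, mul_sum, sum_sub_distrib]
    exact congrArg _ sum_comm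
  have halpha : alpha θ = sSup {x | ∃ S T, x = |blockSum Γ S T|} := by
    simp only [alpha, hblock]
  rw [normInftyOne, sSup_sum_abs_mulVec_eq_four_mul_sSup_abs_blockSum hrow hcol, halpha]
  norm_num [← mul_assoc]

/-- The alpha-mixing coefficient equals one quarter of the `(∞,1)`-induced norm of
`Γ = θ − μνᵗ`. -/
theorem alpha_eq_quarter_normInftyOne {n m : ℕ} (θ : Fin n → Fin m → ℝ)
    (hnn : ∀ i j, 0 ≤ θ i j) (hsum : ∑ i, ∑ j, θ i j = 1) :
    alpha θ = 0.25 * normInftyOne (Matrix.of fun i j => θ i j - margX θ i * margY θ j) :=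
  alpha_eq_quarter_normInftyOne_general θ hsum
end

section
/- The alpha-mixing coefficient satisfies α(X,Y) = max over a ∈ {0,1}^n and b ∈ {0,1}^m of aᵗΓb, and this equals 0.5 · max_{b∈{0,1}^m} ‖Γb‖₁. -/
open Finset

namespace AlphaAux

variable {n m : ℕ}

noncomputable def gam (θ : Fin n → Fin m → ℝ) (i : Fin n) (j : Fin m) : ℝ :=
  θ i j - margX θ i * margY θ j

lemma rect_eq (θ : Fin n → Fin m → ℝ) (S : Finset (Fin n)) (T : Finset (Fin m)) :
    Pjoint θ S T - PX θ S * PY θ T = ∑ i ∈ S, ∑ j ∈ T, gam θ i j := by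
  unfold Pjoint PX PY gam
  rw [Finset.sum_mul_sum, ← Finset.sum_sub_distrib]
  exact Finset.sum_congr rfl fun i _ => by rw [← Finset.sum_sub_distrib]

lemma colsum (θ : Fin n → Fin m → ℝ) (hsum : ∑ i, ∑ j, θ i j = 1) (j : Fin m) :
    ∑ i, gam θ i j = 0 := by
  unfold gam
  rw [Finset.sum_sub_distrib, ← Finset.sum_mul]
  have h1 : ∑ i, margX θ i = 1 := by unfold margX; exact hsum
  rw [h1, one_mul]
  unfold margY
  rw [sub_self]

lemma indicator_sum (θ : Fin n → Fin m → ℝ) (S : Finset (Fin n)) (T : Finset (Fin m)) :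
    ∑ i, ∑ j, (if i ∈ S then (1:ℝ) else 0) * gam θ i j * (if j ∈ T then (1:ℝ) else 0)
      = ∑ i ∈ S, ∑ j ∈ T, gam θ i j := by
  simp [ite_mul, mul_ite, Finset.sum_ite_mem, Finset.univ_inter]

lemma sum_mul_le_half (g : Fin n → ℝ) (hg : ∑ i, g i = 0) (a : Fin n → ℝ)
    (ha : ∀ i, a i = 0 ∨ a i = 1) :
    ∑ i, a i * g i ≤ 0.5 * ∑ i, |g i| := by
  have h : ∑ i, a i * g i ≤ ∑ i, (|g i| + g i) / 2 := by
    apply Finset.sum_le_sum; intro i _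
    rcases ha i with h | h <;> rw [h]
    · simp only [zero_mul]; linarith [neg_abs_le (g i)]
    · rw [one_mul]; linarith [le_abs_self (g i)]
  have h2 : ∑ i, (|g i| + g i) / 2 = (∑ i, |g i| + ∑ i, g i) / 2 := by
    rw [← Finset.sum_add_distrib, Finset.sum_div]
  rw [h2, hg, add_zero] at h
  linarith

lemma exists_half (g : Fin n → ℝ) (hg : ∑ i, g i = 0) :
    ∑ i, (if 0 ≤ g i then (1:ℝ) else 0) * g i = 0.5 * ∑ i, |g i| := by
  have h1 : ∀ i, (if 0 ≤ g i then (1:ℝ) else 0) * g i = (|g i| + g i) / 2 := fun i => by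
    by_cases h : 0 ≤ g i
    · rw [if_pos h, abs_of_nonneg h]; ring
    · rw [if_neg h, abs_of_neg (lt_of_not_ge h)]; ring
  rw [Finset.sum_congr rfl fun i _ => h1 i]
  have h2 : ∑ i, (|g i| + g i) / 2 = (∑ i, |g i| + ∑ i, g i) / 2 := by
    rw [← Finset.sum_add_distrib, Finset.sum_div]
  rw [h2, hg, add_zero]
  ring

end AlphaAux

/-- The alpha-mixing coefficient equals the maximum of `aᵗΓb` over 0-1 vectors `a`, `b`,
which in turn equals `0.5 · max_{b ∈ {0,1}^m} ‖Γb‖₁`, where `Γ = θ − μνᵗ`. -/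
theorem alpha_eq_max_binary_quadratic {n m : ℕ} (θ : Fin n → Fin m → ℝ)
    (hnn : ∀ i j, 0 ≤ θ i j) (hsum : ∑ i, ∑ j, θ i j = 1) :
    alpha θ = sSup {x : ℝ | ∃ (a : Fin n → ℝ) (b : Fin m → ℝ),
        (∀ i, a i = 0 ∨ a i = 1) ∧ (∀ j, b j = 0 ∨ b j = 1) ∧
        x = ∑ i, ∑ j, a i * (θ i j - margX θ i * margY θ j) * b j} ∧
    alpha θ = 0.5 * sSup {x : ℝ | ∃ b : Fin m → ℝ, (∀ j, b j = 0 ∨ b j = 1) ∧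
        x = ∑ i, |∑ j, (θ i j - margX θ i * margY θ j) * b j|} := by
    classical
  set γ := AlphaAux.gam θ with hγdef
  have hγ : ∀ i j, θ i j - margX θ i * margY θ j = γ i j := fun i j => rfl
  set A := {x : ℝ | ∃ (S : Finset (Fin n)) (T : Finset (Fin m)),
    x = |Pjoint θ S T - PX θ S * PY θ T|} with hAdef
  set B := {x : ℝ | ∃ (a : Fin n → ℝ) (b : Fin m → ℝ),
      (∀ i, a i = 0 ∨ a i = 1) ∧ (∀ j, b j = 0 ∨ b j = 1) ∧
      x = ∑ i, ∑ j, a i * (θ i j - margX θ i * margY θ j) * b j} with hBdef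
  set C := {x : ℝ | ∃ b : Fin m → ℝ, (∀ j, b j = 0 ∨ b j = 1) ∧
      x = ∑ i, |∑ j, (θ i j - margX θ i * margY θ j) * b j|} with hCdef
  -- rectangle sums belong to B
  have hrectB : ∀ (S : Finset (Fin n)) (T : Finset (Fin m)),
      (∑ i ∈ S, ∑ j ∈ T, γ i j) ∈ B := by
    intro S T
    refine ⟨fun i => if i ∈ S then 1 else 0, fun j => if j ∈ T then 1 else 0,
      fun i => by by_cases h : i ∈ S <;> simp [h],
      fun j => by by_cases h : j ∈ T <;> simp [h], ?_⟩
    rw [← AlphaAux.indicator_sum θ S T]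
    rfl
  -- every element of B is a rectangle sum
  have hBform : ∀ x ∈ B, ∃ (S : Finset (Fin n)) (T : Finset (Fin m)),
      x = ∑ i ∈ S, ∑ j ∈ T, γ i j := by
    rintro x ⟨a, b, ha, hb, rfl⟩
    refine ⟨univ.filter (fun i => a i = 1), univ.filter (fun j => b j = 1), ?_⟩
    rw [← AlphaAux.indicator_sum θ]
    apply Finset.sum_congr rfl; intro i _
    apply Finset.sum_congr rfl; intro j _
    have h1 : a i = if i ∈ univ.filter (fun i => a i = 1) then (1:ℝ) else 0 := by
      rcases ha i with h | h <;> simp [h]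
    have h2 : b j = if j ∈ univ.filter (fun j => b j = 1) then (1:ℝ) else 0 := by
      rcases hb j with h | h <;> simp [h]
    rw [← h1, ← h2, hγ]
  -- complement negation
  have hcompl : ∀ (S : Finset (Fin n)) (T : Finset (Fin m)),
      ∑ i ∈ Sᶜ, ∑ j ∈ T, γ i j = -(∑ i ∈ S, ∑ j ∈ T, γ i j) := by
    intro S T
    have h1 : (∑ i ∈ S, ∑ j ∈ T, γ i j) + ∑ i ∈ Sᶜ, ∑ j ∈ T, γ i j
        = ∑ i, ∑ j ∈ T, γ i j := Finset.sum_add_sum_compl S _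
    have h2 : ∑ i, ∑ j ∈ T, γ i j = 0 := by
      rw [Finset.sum_comm]
      exact Finset.sum_eq_zero fun j _ => AlphaAux.colsum θ hsum j
    linarith
  -- A ⊆ B
  have hAB : A ⊆ B := by
    rintro x ⟨S, T, rfl⟩
    rw [AlphaAux.rect_eq]
    rcases abs_cases (∑ i ∈ S, ∑ j ∈ T, γ i j) with ⟨h, _⟩ | ⟨h, _⟩
    · rw [h]; exact hrectB S T
    · rw [h, ← hcompl]; exact hrectB Sᶜ T
  -- bound on B
  have hBbdd : BddAbove B := by
    refine ⟨∑ i, ∑ j, |γ i j|, ?_⟩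
    rintro x ⟨a, b, ha, hb, rfl⟩
    apply Finset.sum_le_sum; intro i _
    apply Finset.sum_le_sum; intro j _
    rw [hγ]
    rcases ha i with h | h <;> rcases hb j with h' | h' <;>
      simp [h, h', abs_nonneg, le_abs_self]
  have hAbdd : BddAbove A := hBbdd.mono hAB
  have hAne : A.Nonempty := ⟨|Pjoint θ ∅ ∅ - PX θ ∅ * PY θ ∅|, ∅, ∅, rfl⟩
  have hBne : B.Nonempty := hAne.mono hAB
  -- first equality
  have heq1 : alpha θ = sSup B := by
    refine le_antisymm (csSup_le hAne fun x hx => le_csSup hBbdd (hAB hx)) ?_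
    refine csSup_le hBne fun x hx => ?_
    obtain ⟨S, T, rfl⟩ := hBform x hx
    refine le_trans (le_abs_self _) (le_csSup hAbdd ⟨S, T, ?_⟩)
    rw [AlphaAux.rect_eq]
  -- second equality infrastructure
  have hgsum : ∀ (b : Fin m → ℝ), ∑ i, ∑ j, γ i j * b j = 0 := by
    intro b
    rw [Finset.sum_comm]
    apply Finset.sum_eq_zero; intro j _
    rw [← Finset.sum_mul, AlphaAux.colsum θ hsum j, zero_mul]
  have hCne : C.Nonempty := ⟨0, fun _ => 0, fun j => Or.inl rfl, by simp⟩
  have hCbdd : BddAbove C := by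
    refine ⟨∑ i, ∑ j, |γ i j|, ?_⟩
    rintro x ⟨b, hb, rfl⟩
    apply Finset.sum_le_sum; intro i _
    refine le_trans (Finset.abs_sum_le_sum_abs _ _) (Finset.sum_le_sum fun j _ => ?_)
    rw [hγ]
    rcases hb j with h | h <;> simp [h, abs_nonneg]
  -- rewrite B elements as ∑ a i * g i
  have hBg : ∀ (a : Fin n → ℝ) (b : Fin m → ℝ),
      ∑ i, ∑ j, a i * (θ i j - margX θ i * margY θ j) * b j
        = ∑ i, a i * ∑ j, γ i j * b j := by
    intro a b
    apply Finset.sum_congr rfl; intro i _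
    rw [Finset.mul_sum]
    apply Finset.sum_congr rfl; intro j _
    rw [hγ]; ring
  have heq2 : sSup B = 0.5 * sSup C := by
    have hle : sSup B ≤ 0.5 * sSup C := by
      refine csSup_le hBne ?_
      rintro x ⟨a, b, ha, hb, rfl⟩
      rw [hBg]
      refine le_trans (AlphaAux.sum_mul_le_half _ (hgsum b) a ha) ?_
      have : (∑ i, |∑ j, γ i j * b j|) ≤ sSup C := by
        refine le_csSup hCbdd ⟨b, hb, ?_⟩
        simp only [hγ]
      linarith
    have hge : ∀ y ∈ C, 0.5 * y ≤ sSup B := by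
      rintro y ⟨b, hb, rfl⟩
      have hmem : (0.5 * ∑ i, |∑ j, γ i j * b j|) ∈ B := by
        refine ⟨fun i => if 0 ≤ ∑ j, γ i j * b j then 1 else 0, b,
          fun i => by by_cases h : 0 ≤ ∑ j, γ i j * b j <;> simp [h], hb, ?_⟩
        rw [hBg, AlphaAux.exists_half _ (hgsum b)]
      have := le_csSup hBbdd hmem
      simp only [hγ] at this ⊢
      linarith
    have h2 : sSup C ≤ 2 * sSup B := by
      refine csSup_le hCne fun y hy => ?_
      have := hge y hy; linarith
    linarith
  rw [heq1] at *
  exact ⟨rfl, heq2⟩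
end

section
/- Suppose ν_j > 0 for all j. Then the phi-mixing coefficient admits the exact formula φ(X|Y) = max_j (1/ν_j) Σ_i (γ_{ij})_+ = 0.5 · max_j (1/ν_j) Σ_i |γ_{ij}|, where (x)_+ = max{x,0}; equivalently φ(X|Y) = 0.5 · ‖Γ·Diag(ν)^{-1}‖_{1,1}, the maximum over columns of the 1-norm of the columns of Γ·Diag(ν)^{-1}. -/
open Finset

/-- The phi-mixing coefficient:
`φ(X|Y) = max over S ⊆ 𝔸, T ⊆ 𝔹 with P_ν(T) > 0 of |P_θ(S×T)/P_ν(T) − P_μ(S)|`. -/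
noncomputable def phi {n m : ℕ} (θ : Fin n → Fin m → ℝ) : ℝ :=
  sSup {x : ℝ | ∃ (S : Finset (Fin n)) (T : Finset (Fin m)),
    0 < PY θ T ∧ x = |Pjoint θ S T / PY θ T - PX θ S|}

lemma colsum {n m : ℕ} (θ : Fin n → Fin m → ℝ) (hsum : ∑ i, ∑ j, θ i j = 1) (j : Fin m) :
    ∑ i, (θ i j - margX θ i * margY θ j) = 0 := by
  have h1 : ∑ i, margX θ i = 1 := hsum
  rw [Finset.sum_sub_distrib, ← Finset.sum_mul, h1, one_mul]
  simp [margY]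

lemma abs_partial_le {n m : ℕ} (θ : Fin n → Fin m → ℝ) (hsum : ∑ i, ∑ j, θ i j = 1)
    (S : Finset (Fin n)) (j : Fin m) :
    |∑ i ∈ S, (θ i j - margX θ i * margY θ j)| ≤
      ∑ i, max (θ i j - margX θ i * margY θ j) 0 := by
  set γ := fun i => θ i j - margX θ i * margY θ j with hγ
  have hc : ∑ i, γ i = 0 := colsum θ hsum j
  have hpos : ∀ S' : Finset (Fin n), ∑ i ∈ S', γ i ≤ ∑ i, max (γ i) 0 := by
    intro S'
    calc ∑ i ∈ S', γ i ≤ ∑ i ∈ S', max (γ i) 0 :=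
          Finset.sum_le_sum fun i _ => le_max_left _ _
    _ ≤ ∑ i, max (γ i) 0 := Finset.sum_le_sum_of_subset_of_nonneg
          (Finset.subset_univ _) (fun i _ _ => le_max_right _ _)
  rw [abs_le]
  constructor
  · have h2 := hpos Sᶜ
    have h3 : ∑ i ∈ S, γ i + ∑ i ∈ Sᶜ, γ i = 0 := by
      rw [Finset.sum_add_sum_compl]; exact hc
    linarith
  · exact hpos S

/-- Exact formula for the phi-mixing coefficient: with `γ_{ij} = θ_{ij} − μ_i ν_j`,
`φ(X|Y) = max_j (1/ν_j) Σ_i (γ_{ij})₊ = 0.5 · max_j (1/ν_j) Σ_i |γ_{ij}|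
        = 0.5 · ‖Γ·Diag(ν)⁻¹‖_{1,1}` (the maximal column 1-norm of `Γ·Diag(ν)⁻¹`). -/
theorem phi_exact_formula {n m : ℕ} (θ : Fin n → Fin m → ℝ)
    (hnn : ∀ i j, 0 ≤ θ i j) (hsum : ∑ i, ∑ j, θ i j = 1)
    (hν : ∀ j, 0 < margY θ j) :
    phi θ = sSup {x : ℝ | ∃ j : Fin m,
        x = (1 / margY θ j) * ∑ i, max (θ i j - margX θ i * margY θ j) 0} ∧
    phi θ = 0.5 * sSup {x : ℝ | ∃ j : Fin m,
        x = (1 / margY θ j) * ∑ i, |θ i j - margX θ i * margY θ j|} ∧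
    phi θ = 0.5 * sSup {x : ℝ | ∃ j : Fin m,
        x = ∑ i, |((Matrix.of fun i j => θ i j - margX θ i * margY θ j) *
              Matrix.diagonal (fun j => (margY θ j)⁻¹)) i j|} := by
  -- m = 0 is impossible
  rcases Nat.eq_zero_or_pos m with hm | hm
  · exfalso; subst hm; simp at hsum
  haveI : Nonempty (Fin m) := Fin.pos_iff_nonempty.mp hm
  set γ : Fin n → Fin m → ℝ := fun i j => θ i j - margX θ i * margY θ j with hγ
  set g : Fin m → ℝ := fun j => (1 / margY θ j) * ∑ i, max (γ i j) 0 with hg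
  obtain ⟨j₀, -, hj₀⟩ := Finset.exists_max_image Finset.univ g Finset.univ_nonempty
  have hj₀' : ∀ j, g j ≤ g j₀ := fun j => hj₀ j (Finset.mem_univ j)
  have hg0 : ∀ j, 0 ≤ g j := by
    intro j
    apply mul_nonneg (one_div_nonneg.mpr (hν j).le)
    exact Finset.sum_nonneg fun i _ => le_max_right _ _
  have hνg : ∀ j, ∑ i, max (γ i j) 0 = margY θ j * g j := by
    intro j
    have h : margY θ j * g j = margY θ j * (1 / margY θ j * ∑ i, max (γ i j) 0) := rfl
    rw [h, ← mul_assoc, mul_one_div, div_self (hν j).ne', one_mul]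
  -- decomposition
  have hdecomp : ∀ (S : Finset (Fin n)) (T : Finset (Fin m)),
      Pjoint θ S T - PX θ S * PY θ T = ∑ j ∈ T, ∑ i ∈ S, γ i j := by
    intro S T
    have hcomm : ∑ j ∈ T, ∑ i ∈ S, γ i j = ∑ i ∈ S, ∑ j ∈ T, γ i j := Finset.sum_comm
    rw [hcomm, Pjoint, PX, PY, Finset.sum_mul_sum, ← Finset.sum_sub_distrib]
    exact Finset.sum_congr rfl fun i _ => by rw [← Finset.sum_sub_distrib]
  -- upper bound
  have hub : ∀ (S : Finset (Fin n)) (T : Finset (Fin m)), 0 < PY θ T →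
      |Pjoint θ S T / PY θ T - PX θ S| ≤ g j₀ := by
    intro S T hT
    have hkey : Pjoint θ S T / PY θ T - PX θ S = (∑ j ∈ T, ∑ i ∈ S, γ i j) / PY θ T := by
      rw [eq_div_iff hT.ne', sub_mul, div_mul_cancel₀ _ hT.ne', ← hdecomp S T]
    rw [hkey, abs_div, abs_of_pos hT, div_le_iff₀ hT]
    calc |∑ j ∈ T, ∑ i ∈ S, γ i j| ≤ ∑ j ∈ T, |∑ i ∈ S, γ i j| :=
          Finset.abs_sum_le_sum_abs _ _
    _ ≤ ∑ j ∈ T, margY θ j * g j₀ := by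
        refine Finset.sum_le_sum fun j _ => ?_
        calc |∑ i ∈ S, γ i j| ≤ ∑ i, max (γ i j) 0 := abs_partial_le θ hsum S j
        _ = margY θ j * g j := hνg j
        _ ≤ margY θ j * g j₀ := mul_le_mul_of_nonneg_left (hj₀' j) (hν j).le
    _ = g j₀ * PY θ T := by rw [← Finset.sum_mul, PY, mul_comm]
  -- attainment
  set Sstar : Finset (Fin n) := Finset.univ.filter (fun i => 0 < γ i j₀) with hSs
  have hSsum : ∑ i ∈ Sstar, γ i j₀ = ∑ i, max (γ i j₀) 0 := by
    rw [show (∑ i, max (γ i j₀) 0) = ∑ i ∈ Sstar, max (γ i j₀) 0 from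
      (Finset.sum_subset (Finset.subset_univ _) (fun i _ hi => by
        rw [hSs] at hi
        simp only [Finset.mem_filter, Finset.mem_univ, true_and, not_lt] at hi
        exact max_eq_right hi)).symm]
    refine Finset.sum_congr rfl fun i hi => ?_
    rw [hSs] at hi
    simp only [Finset.mem_filter, Finset.mem_univ, true_and] at hi
    exact (max_eq_left hi.le).symm
  have hPYj : ∀ j : Fin m, PY θ {j} = margY θ j := by
    intro j; simp [PY]
  have hval : Pjoint θ Sstar {j₀} / PY θ {j₀} - PX θ Sstar = g j₀ := by
    have hPj : Pjoint θ Sstar {j₀} = ∑ i ∈ Sstar, θ i j₀ := by simp [Pjoint]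
    have h1 : ∑ i ∈ Sstar, γ i j₀
        = ∑ i ∈ Sstar, θ i j₀ - (∑ i ∈ Sstar, margX θ i) * margY θ j₀ := by
      rw [hγ, Finset.sum_sub_distrib, Finset.sum_mul]
    rw [hPYj j₀, hPj, PX]
    show _ = 1 / margY θ j₀ * ∑ i, max (γ i j₀) 0
    rw [← hSsum, h1, one_div, inv_mul_eq_div, sub_div, mul_div_assoc,
      div_self (hν j₀).ne', mul_one]
  have hT0 : 0 < PY θ {j₀} := by rw [hPYj]; exact hν j₀
  have hmem : g j₀ ∈ {x : ℝ | ∃ (S : Finset (Fin n)) (T : Finset (Fin m)),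
      0 < PY θ T ∧ x = |Pjoint θ S T / PY θ T - PX θ S|} :=
    ⟨Sstar, {j₀}, hT0, by rw [hval, abs_of_nonneg (hg0 j₀)]⟩
  have hbdd : BddAbove {x : ℝ | ∃ (S : Finset (Fin n)) (T : Finset (Fin m)),
      0 < PY θ T ∧ x = |Pjoint θ S T / PY θ T - PX θ S|} :=
    ⟨g j₀, fun x ⟨S, T, hT, hx⟩ => hx ▸ hub S T hT⟩
  have hφ : phi θ = g j₀ := by
    refine le_antisymm (csSup_le ⟨g j₀, hmem⟩ ?_) (le_csSup hbdd hmem)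
    rintro x ⟨S, T, hT, hx⟩
    exact hx ▸ hub S T hT
  -- absolute-value sums
  have habs : ∀ j, ∑ i, |γ i j| = 2 * ∑ i, max (γ i j) 0 := by
    intro j
    have hc := colsum θ hsum j
    have h3 : ∀ i, |γ i j| = 2 * max (γ i j) 0 - γ i j := by
      intro i
      rcases le_or_gt (γ i j) 0 with h | h
      · rw [abs_of_nonpos h, max_eq_right h]; ring
      · rw [abs_of_pos h, max_eq_left h.le]; ring
    rw [Finset.sum_congr rfl fun i _ => h3 i, Finset.sum_sub_distrib, hγ, hc,
      ← Finset.mul_sum]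
    ring
  have hsup1 : sSup {x : ℝ | ∃ j : Fin m, x = g j} = g j₀ := by
    refine le_antisymm (csSup_le ⟨g j₀, j₀, rfl⟩ ?_)
      (le_csSup ⟨g j₀, fun x ⟨j, hj⟩ => hj ▸ hj₀' j⟩ ⟨j₀, rfl⟩)
    rintro x ⟨j, rfl⟩
    exact hj₀' j
  have hset2 : ∀ j : Fin m, (1 / margY θ j) * ∑ i, |γ i j| = 2 * g j := by
    intro j
    rw [habs j, hg]
    ring
  have hsup2 : sSup {x : ℝ | ∃ j : Fin m, x = (1 / margY θ j) * ∑ i, |γ i j|}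
      = 2 * g j₀ := by
    refine le_antisymm (csSup_le ⟨_, j₀, rfl⟩ ?_)
      (le_csSup ⟨2 * g j₀, fun x ⟨j, hj⟩ => by
        rw [hj, hset2 j]; linarith [hj₀' j]⟩ ⟨j₀, (hset2 j₀).symm⟩)
    rintro x ⟨j, rfl⟩
    rw [hset2 j]
    linarith [hj₀' j]
  have hset3 : ∀ j : Fin m,
      (∑ i, |((Matrix.of γ) * Matrix.diagonal (fun j => (margY θ j)⁻¹)) i j|)
      = 2 * g j := by
    intro j
    have : ∀ i : Fin n,
        |((Matrix.of γ) * Matrix.diagonal (fun j => (margY θ j)⁻¹)) i j|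
        = |γ i j| * (margY θ j)⁻¹ := by
      intro i
      rw [Matrix.mul_diagonal, abs_mul, abs_of_pos (inv_pos.mpr (hν j))]
      rfl
    rw [Finset.sum_congr rfl fun i _ => this i, ← Finset.sum_mul, habs j, hg]
    field_simp
    try ring
  have hsup3 : sSup {x : ℝ | ∃ j : Fin m,
      x = ∑ i, |((Matrix.of γ) * Matrix.diagonal (fun j => (margY θ j)⁻¹)) i j|}
      = 2 * g j₀ := by
    refine le_antisymm (csSup_le ⟨_, j₀, rfl⟩ ?_)
      (le_csSup ⟨2 * g j₀, fun x ⟨j, hj⟩ => by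
        rw [hj, hset3 j]; linarith [hj₀' j]⟩ ⟨j₀, (hset3 j₀).symm⟩)
    rintro x ⟨j, rfl⟩
    rw [hset3 j]
    linarith [hj₀' j]
  refine ⟨?_, ?_, ?_⟩
  · rw [hφ, hsup1]
  · rw [hφ, hsup2]; try ring
  · rw [hφ, hsup3]; try ring
end

section
/- Data-processing inequality for alpha-mixing: if X and Z are conditionally independent given Y, then α(X,Z) ≤ min{ α(X,Y), α(Y,Z) }. -/
open Finset

/-- Key convexity lemma: if all subset-partial-sums of `d` are bounded by `a` in absolute
value, and `0 ≤ g ≤ M` on `s`, then `|∑ d j * g j| ≤ a * M`. -/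
lemma key_lemma {J : Type*} [DecidableEq J] (a : ℝ) (d : J → ℝ) (s : Finset J) :
    ∀ (g : J → ℝ) (M : ℝ), 0 ≤ M → (∀ j ∈ s, 0 ≤ g j) → (∀ j ∈ s, g j ≤ M) →
    (∀ T ⊆ s, |∑ j ∈ T, d j| ≤ a) → |∑ j ∈ s, d j * g j| ≤ a * M := by
  induction s using Finset.strongInduction with
  | _ s ih =>
    intro g M hM hg0 hgM hT
    have ha : 0 ≤ a := by simpa using hT ∅ (Finset.empty_subset s)
    rcases s.eq_empty_or_nonempty with rfl | hne
    · simpa using mul_nonneg ha hM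
    · obtain ⟨j0, hj0, hmin⟩ := s.exists_min_image g hne
      set c := g j0 with hc
      have hzero : d j0 * (g j0 - c) = 0 := by simp [hc]
      have hsum : ∑ j ∈ s, d j * g j
          = c * (∑ j ∈ s, d j) + ∑ j ∈ s.erase j0, d j * (g j - c) := by
        rw [Finset.sum_erase s hzero, Finset.mul_sum, ← Finset.sum_add_distrib]
        exact Finset.sum_congr rfl (fun j _ => by ring)
      have hc0 : 0 ≤ c := hg0 j0 hj0
      have hcM : c ≤ M := hgM j0 hj0
      have h1 : |∑ j ∈ s.erase j0, d j * (g j - c)| ≤ a * (M - c) := by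
        refine ih (s.erase j0) (Finset.erase_ssubset hj0) _ (M - c) (by linarith) ?_ ?_ ?_
        · exact fun j hj => sub_nonneg.2 (hmin j (Finset.mem_of_mem_erase hj))
        · exact fun j hj => sub_le_sub (hgM j (Finset.mem_of_mem_erase hj)) le_rfl
        · exact fun T hT' => hT T (hT'.trans (Finset.erase_subset _ _))
      have h2 : |∑ j ∈ s, d j| ≤ a := hT s Finset.Subset.rfl
      rw [hsum]
      calc |c * (∑ j ∈ s, d j) + ∑ j ∈ s.erase j0, d j * (g j - c)|
          ≤ |c * (∑ j ∈ s, d j)| + |∑ j ∈ s.erase j0, d j * (g j - c)| := abs_add_le _ _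
        _ ≤ c * a + a * (M - c) := by
            rw [abs_mul, abs_of_nonneg hc0]
            exact add_le_add (mul_le_mul_of_nonneg_left h2 hc0) h1
        _ = a * M := by ring

lemma Pjoint_le_one {n m : ℕ} (θ : Fin n → Fin m → ℝ) (h0 : ∀ i j, 0 ≤ θ i j)
    (h1 : ∑ i, ∑ j, θ i j = 1) (S : Finset (Fin n)) (T : Finset (Fin m)) :
    Pjoint θ S T ≤ 1 := by
  rw [← h1]
  unfold Pjoint
  calc ∑ i ∈ S, ∑ j ∈ T, θ i j
      ≤ ∑ i ∈ S, ∑ j, θ i j :=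
        Finset.sum_le_sum fun i _ =>
          Finset.sum_le_sum_of_subset_of_nonneg (Finset.subset_univ T) (fun j _ _ => h0 i j)
    _ ≤ ∑ i, ∑ j, θ i j :=
        Finset.sum_le_sum_of_subset_of_nonneg (Finset.subset_univ S)
          (fun i _ _ => Finset.sum_nonneg fun j _ => h0 i j)

lemma abs_le_one_aux {n m : ℕ} (θ : Fin n → Fin m → ℝ) (h0 : ∀ i j, 0 ≤ θ i j)
    (h1 : ∑ i, ∑ j, θ i j = 1) (S : Finset (Fin n)) (T : Finset (Fin m)) :
    |Pjoint θ S T - PX θ S * PY θ T| ≤ 1 := by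
  have hPj0 : 0 ≤ Pjoint θ S T :=
    Finset.sum_nonneg fun i _ => Finset.sum_nonneg fun j _ => h0 i j
  have hPj1 : Pjoint θ S T ≤ 1 := Pjoint_le_one θ h0 h1 S T
  have hPX0 : 0 ≤ PX θ S :=
    Finset.sum_nonneg fun i _ => Finset.sum_nonneg fun j _ => h0 i j
  have hPX1 : PX θ S ≤ 1 := by
    rw [← h1]
    exact Finset.sum_le_sum_of_subset_of_nonneg (Finset.subset_univ S)
      (fun i _ _ => Finset.sum_nonneg fun j _ => h0 i j)
  have hPY0 : 0 ≤ PY θ T :=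
    Finset.sum_nonneg fun j _ => Finset.sum_nonneg fun i _ => h0 i j
  have hPY1 : PY θ T ≤ 1 := by
    have : ∑ j, ∑ i, θ i j = 1 := by rw [Finset.sum_comm]; exact h1
    rw [← this]
    exact Finset.sum_le_sum_of_subset_of_nonneg (Finset.subset_univ T)
      (fun j _ _ => Finset.sum_nonneg fun i _ => h0 i j)
  rw [abs_le]
  constructor <;> nlinarith

lemma bdd_alpha {n m : ℕ} (θ : Fin n → Fin m → ℝ) (h0 : ∀ i j, 0 ≤ θ i j)
    (h1 : ∑ i, ∑ j, θ i j = 1) :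
    BddAbove {x : ℝ | ∃ (S : Finset (Fin n)) (T : Finset (Fin m)),
      x = |Pjoint θ S T - PX θ S * PY θ T|} := by
  refine ⟨1, fun x hx => ?_⟩
  obtain ⟨S, T, rfl⟩ := hx
  exact abs_le_one_aux θ h0 h1 S T

lemma abs_le_alpha {n m : ℕ} (θ : Fin n → Fin m → ℝ) (h0 : ∀ i j, 0 ≤ θ i j)
    (h1 : ∑ i, ∑ j, θ i j = 1) (S : Finset (Fin n)) (T : Finset (Fin m)) :
    |Pjoint θ S T - PX θ S * PY θ T| ≤ alpha θ :=
  le_csSup (bdd_alpha θ h0 h1) ⟨S, T, rfl⟩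

lemma alpha_nonneg' {n m : ℕ} (θ : Fin n → Fin m → ℝ) (h0 : ∀ i j, 0 ≤ θ i j)
    (h1 : ∑ i, ∑ j, θ i j = 1) : 0 ≤ alpha θ :=
  le_trans (abs_nonneg _) (abs_le_alpha θ h0 h1 ∅ ∅)

/-- Data-processing inequality for the alpha-mixing coefficient: if `X` and `Z` are
conditionally independent given `Y`, then `α(X,Z) ≤ min{α(X,Y), α(Y,Z)}`.  Here `δ` is the
joint distribution of `(X,Y,Z)` and the pairwise joint distributions are its marginals. -/
theorem alpha_data_processing {n m p : ℕ} (δ : Fin n → Fin m → Fin p → ℝ)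
    (hnn : ∀ i j k, 0 ≤ δ i j k) (hsum : ∑ i, ∑ j, ∑ k, δ i j k = 1)
    (hci : ∀ i j k, 0 < (∑ i', ∑ k', δ i' j k') →
      δ i j k * (∑ i', ∑ k', δ i' j k') = (∑ k', δ i j k') * (∑ i', δ i' j k)) :
    alpha (fun i k => ∑ j, δ i j k) ≤
      min (alpha (fun i j => ∑ k, δ i j k)) (alpha (fun j k => ∑ i, δ i j k)) := by
  classical
  have hXY0 : ∀ i j, 0 ≤ ∑ k, δ i j k := fun i j => Finset.sum_nonneg fun k _ => hnn i j k
  have hYZ0 : ∀ j k, 0 ≤ ∑ i, δ i j k := fun j k => Finset.sum_nonneg fun i _ => hnn i j k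
  have hYZ1 : ∑ j, ∑ k, ∑ i, δ i j k = 1 := by
    rw [← hsum]
    calc ∑ j, ∑ k, ∑ i, δ i j k = ∑ j, ∑ i, ∑ k, δ i j k :=
          Finset.sum_congr rfl fun j _ => Finset.sum_comm
      _ = ∑ i, ∑ j, ∑ k, δ i j k := Finset.sum_comm
  refine Real.sSup_le ?_ (le_min (alpha_nonneg' _ hXY0 hsum) (alpha_nonneg' _ hYZ0 hYZ1))
  rintro x ⟨S, T, rfl⟩
  -- abbreviations
  set q : Fin m → ℝ := fun j => ∑ i, ∑ k, δ i j k with hq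
  set A : Fin m → ℝ := fun j => ∑ i ∈ S, ∑ k, δ i j k with hA
  set B : Fin m → ℝ := fun j => ∑ k ∈ T, ∑ i, δ i j k with hB
  set C : Fin m → ℝ := fun j => ∑ i ∈ S, ∑ k ∈ T, δ i j k with hC
  set F : ℝ := ∑ j, A j with hF
  set G : ℝ := ∑ j, B j with hG
  have hq0 : ∀ j, 0 ≤ q j := fun j =>
    Finset.sum_nonneg fun i _ => Finset.sum_nonneg fun k _ => hnn i j k
  have hA0 : ∀ j, 0 ≤ A j := fun j =>
    Finset.sum_nonneg fun i _ => Finset.sum_nonneg fun k _ => hnn i j k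
  have hB0 : ∀ j, 0 ≤ B j := fun j =>
    Finset.sum_nonneg fun k _ => Finset.sum_nonneg fun i _ => hnn i j k
  have hAq : ∀ j, A j ≤ q j := fun j =>
    Finset.sum_le_sum_of_subset_of_nonneg (Finset.subset_univ S)
      (fun i _ _ => Finset.sum_nonneg fun k _ => hnn i j k)
  have hBq : ∀ j, B j ≤ q j := by
    intro j
    have : q j = ∑ k, ∑ i, δ i j k := Finset.sum_comm
    rw [this]
    exact Finset.sum_le_sum_of_subset_of_nonneg (Finset.subset_univ T)
      (fun k _ _ => Finset.sum_nonneg fun i _ => hnn i j k)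
  have hCA : ∀ j, C j ≤ A j := fun j =>
    Finset.sum_le_sum fun i _ =>
      Finset.sum_le_sum_of_subset_of_nonneg (Finset.subset_univ T) (fun k _ _ => hnn i j k)
  have hC0 : ∀ j, 0 ≤ C j := fun j =>
    Finset.sum_nonneg fun i _ => Finset.sum_nonneg fun k _ => hnn i j k
  -- the conditional independence identity, summed over the rectangle
  have hCI : ∀ j, C j * q j = A j * B j := by
    intro j
    rcases eq_or_lt_of_le (hq0 j) with h | h
    · have hA' : A j = 0 := le_antisymm (h ▸ hAq j) (hA0 j)
      have hC' : C j = 0 := le_antisymm ((hCA j).trans (le_of_eq hA')) (hC0 j)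
      rw [hA', hC']; ring
    · calc C j * q j = ∑ i ∈ S, ∑ k ∈ T, δ i j k * q j := by
            rw [hC]; rw [Finset.sum_mul]
            exact Finset.sum_congr rfl fun i _ => Finset.sum_mul _ _ _
        _ = ∑ i ∈ S, ∑ k ∈ T, (∑ k', δ i j k') * (∑ i', δ i' j k) :=
            Finset.sum_congr rfl fun i _ => Finset.sum_congr rfl fun k _ => hci i j k h
        _ = A j * B j := by rw [hA, hB, Finset.sum_mul_sum]
  -- rewriting the three XZ quantities
  have e1 : Pjoint (fun i k => ∑ j, δ i j k) S T = ∑ j, C j := by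
    unfold Pjoint
    calc ∑ i ∈ S, ∑ k ∈ T, ∑ j, δ i j k
        = ∑ i ∈ S, ∑ j, ∑ k ∈ T, δ i j k := Finset.sum_congr rfl fun i _ => Finset.sum_comm
      _ = ∑ j, ∑ i ∈ S, ∑ k ∈ T, δ i j k := Finset.sum_comm
  have e2 : PX (fun i k => ∑ j, δ i j k) S = F := by
    unfold PX margX
    calc ∑ i ∈ S, ∑ k, ∑ j, δ i j k
        = ∑ i ∈ S, ∑ j, ∑ k, δ i j k := Finset.sum_congr rfl fun i _ => Finset.sum_comm
      _ = ∑ j, ∑ i ∈ S, ∑ k, δ i j k := Finset.sum_comm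
  have e3 : PY (fun i k => ∑ j, δ i j k) T = G := by
    unfold PY margY
    calc ∑ k ∈ T, ∑ i, ∑ j, δ i j k
        = ∑ k ∈ T, ∑ j, ∑ i, δ i j k := Finset.sum_congr rfl fun k _ => Finset.sum_comm
      _ = ∑ j, ∑ k ∈ T, ∑ i, δ i j k := Finset.sum_comm
  refine le_min ?_ ?_
  · -- bound by alpha(X,Y)
    have hd : ∀ T' : Finset (Fin m),
        |∑ j ∈ T', (A j - F * q j)| ≤ alpha (fun i j => ∑ k, δ i j k) := by
      intro T'
      have key : ∑ j ∈ T', (A j - F * q j) =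
          Pjoint (fun i j => ∑ k, δ i j k) S T'
            - PX (fun i j => ∑ k, δ i j k) S * PY (fun i j => ∑ k, δ i j k) T' := by
        have p1 : Pjoint (fun i j => ∑ k, δ i j k) S T' = ∑ j ∈ T', A j := Finset.sum_comm
        have p2 : PX (fun i j => ∑ k, δ i j k) S = F := Finset.sum_comm
        have p3 : PY (fun i j => ∑ k, δ i j k) T' = ∑ j ∈ T', q j := rfl
        rw [p1, p2, p3, Finset.sum_sub_distrib, Finset.mul_sum]
      rw [key]
      exact abs_le_alpha _ hXY0 hsum S T'
    set g : Fin m → ℝ := fun j => if q j = 0 then 0 else B j / q j with hg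
    have hdg : ∀ j, (A j - F * q j) * g j = C j - F * B j := by
      intro j
      by_cases h : q j = 0
      · have hB' : B j = 0 := le_antisymm (h ▸ hBq j) (hB0 j)
        have hA' : A j = 0 := le_antisymm (h ▸ hAq j) (hA0 j)
        have hC' : C j = 0 := le_antisymm ((hCA j).trans (le_of_eq hA')) (hC0 j)
        simp [hg, h, hB', hC']
      · have : g j = B j / q j := by simp [hg, h]
        rw [this]
        field_simp
        linear_combination -(hCI j)
    have hΔ : Pjoint (fun i k => ∑ j, δ i j k) S T
        - PX (fun i k => ∑ j, δ i j k) S * PY (fun i k => ∑ j, δ i j k) T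
        = ∑ j, (A j - F * q j) * g j := by
      rw [e1, e2, e3, hG, Finset.mul_sum]
      rw [← Finset.sum_sub_distrib]
      exact Finset.sum_congr rfl fun j _ => (hdg j).symm
    rw [hΔ]
    have := key_lemma (alpha (fun i j => ∑ k, δ i j k)) (fun j => A j - F * q j)
      Finset.univ g 1 zero_le_one
      (fun j _ => by
        by_cases h : q j = 0 <;>
          simp [hg, h, div_nonneg (hB0 j) (hq0 j)])
      (fun j _ => by
        by_cases h : q j = 0
        · simp [hg, h]
        · have : g j = B j / q j := by simp [hg, h]
          rw [this]
          exact div_le_one_of_le₀ (hBq j) (hq0 j))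
      (fun T' _ => hd T')
    simpa using this
  · -- bound by alpha(Y,Z)
    have hd : ∀ T' : Finset (Fin m),
        |∑ j ∈ T', (B j - G * q j)| ≤ alpha (fun j k => ∑ i, δ i j k) := by
      intro T'
      have key : ∑ j ∈ T', (B j - G * q j) =
          Pjoint (fun j k => ∑ i, δ i j k) T' T
            - PX (fun j k => ∑ i, δ i j k) T' * PY (fun j k => ∑ i, δ i j k) T := by
        have p1 : Pjoint (fun j k => ∑ i, δ i j k) T' T = ∑ j ∈ T', B j := rfl
        have p2 : PX (fun j k => ∑ i, δ i j k) T' = ∑ j ∈ T', q j :=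
          Finset.sum_congr rfl fun j _ => Finset.sum_comm
        have p3 : PY (fun j k => ∑ i, δ i j k) T = G := Finset.sum_comm
        rw [p1, p2, p3, Finset.sum_sub_distrib, Finset.sum_mul]
        congr 1
        exact Finset.sum_congr rfl fun j _ => mul_comm _ _
      rw [key]
      exact abs_le_alpha _ hYZ0 hYZ1 T' T
    set g : Fin m → ℝ := fun j => if q j = 0 then 0 else A j / q j with hg
    have hdg : ∀ j, (B j - G * q j) * g j = C j - G * A j := by
      intro j
      by_cases h : q j = 0
      · have hB' : B j = 0 := le_antisymm (h ▸ hBq j) (hB0 j)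
        have hA' : A j = 0 := le_antisymm (h ▸ hAq j) (hA0 j)
        have hC' : C j = 0 := le_antisymm ((hCA j).trans (le_of_eq hA')) (hC0 j)
        simp [hg, h, hA', hC']
      · have : g j = A j / q j := by simp [hg, h]
        rw [this]
        field_simp
        linear_combination -(hCI j)
    have hΔ : Pjoint (fun i k => ∑ j, δ i j k) S T
        - PX (fun i k => ∑ j, δ i j k) S * PY (fun i k => ∑ j, δ i j k) T
        = ∑ j, (B j - G * q j) * g j := by
      rw [e1, e2, e3, hF, Finset.sum_mul]
      rw [← Finset.sum_sub_distrib]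
      refine Finset.sum_congr rfl fun j _ => ?_
      rw [hdg j]; ring
    rw [hΔ]
    have := key_lemma (alpha (fun j k => ∑ i, δ i j k)) (fun j => B j - G * q j)
      Finset.univ g 1 zero_le_one
      (fun j _ => by
        by_cases h : q j = 0 <;>
          simp [hg, h, div_nonneg (hA0 j) (hq0 j)])
      (fun j _ => by
        by_cases h : q j = 0
        · simp [hg, h]
        · have : g j = A j / q j := by simp [hg, h]
          rw [this]
          exact div_le_one_of_le₀ (hAq j) (hq0 j))
      (fun T' _ => hd T')
    simpa using this
end

section
/- Data-processing inequality for beta-mixing: if X and Z are conditionally independent given Y, then β(X,Z) ≤ min{ β(X,Y), β(Y,Z) }. -/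
open Finset

/-- The beta-mixing coefficient: the total variation distance between the joint
distribution `θ` and the product `μ × ν` of its marginals. -/
noncomputable def beta {n m : ℕ} (θ : Fin n → Fin m → ℝ) : ℝ :=
  sSup {x : ℝ | ∃ U : Finset (Fin n × Fin m),
    x = |(∑ p ∈ U, θ p.1 p.2) - ∑ p ∈ U, margX θ p.1 * margY θ p.2|}

lemma sum_mem_ite {a b : ℕ} (U : Finset (Fin a × Fin b)) (f : Fin a → Fin b → ℝ) :
    ∑ p ∈ U, f p.1 p.2 = ∑ i, ∑ j, if (i, j) ∈ U then f i j else 0 := by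
  calc ∑ p ∈ U, f p.1 p.2
      = ∑ p ∈ (univ : Finset (Fin a × Fin b)), if p ∈ U then f p.1 p.2 else 0 := by
        rw [Finset.sum_ite_mem, Finset.univ_inter]
    _ = ∑ i, ∑ j, if (i, j) ∈ U then f i j else 0 := Fintype.sum_prod_type _

lemma betaSet_finite {n m : ℕ} (θ : Fin n → Fin m → ℝ) :
    {x : ℝ | ∃ U : Finset (Fin n × Fin m),
      x = |(∑ p ∈ U, θ p.1 p.2) - ∑ p ∈ U, margX θ p.1 * margY θ p.2|}.Finite := by
  have h : {x : ℝ | ∃ U : Finset (Fin n × Fin m),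
      x = |(∑ p ∈ U, θ p.1 p.2) - ∑ p ∈ U, margX θ p.1 * margY θ p.2|}
      = Set.range (fun U : Finset (Fin n × Fin m) =>
        |(∑ p ∈ U, θ p.1 p.2) - ∑ p ∈ U, margX θ p.1 * margY θ p.2|) := by
    ext x; simp [Set.mem_range, eq_comm]
  rw [h]; exact Set.finite_range _

lemma abs_le_beta {n m : ℕ} (θ : Fin n → Fin m → ℝ) (U : Finset (Fin n × Fin m)) :
    |(∑ p ∈ U, θ p.1 p.2) - ∑ p ∈ U, margX θ p.1 * margY θ p.2| ≤ beta θ :=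
  le_csSup (betaSet_finite θ).bddAbove ⟨U, rfl⟩

lemma beta_nonneg {n m : ℕ} (θ : Fin n → Fin m → ℝ) : 0 ≤ beta θ := by
  have := abs_le_beta θ ∅; simpa using this

lemma abs_sum_mul_le_beta {a b : ℕ} (θ g : Fin a → Fin b → ℝ)
    (hg0 : ∀ i j, 0 ≤ g i j) (hg1 : ∀ i j, g i j ≤ 1) :
    |∑ i, ∑ j, (θ i j - margX θ i * margY θ j) * g i j| ≤ beta θ := by
  set μ : Fin a → Fin b → ℝ := fun i j => θ i j - margX θ i * margY θ j with hμ
  have key : ∀ W : Finset (Fin a × Fin b), |∑ p ∈ W, μ p.1 p.2| ≤ beta θ := by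
    intro W
    have h : ∑ p ∈ W, μ p.1 p.2
        = (∑ p ∈ W, θ p.1 p.2) - ∑ p ∈ W, margX θ p.1 * margY θ p.2 := by
      rw [← Finset.sum_sub_distrib]
    rw [h]; exact abs_le_beta θ W
  rw [abs_le]
  constructor
  · set W := (univ : Finset (Fin a × Fin b)).filter (fun q => μ q.1 q.2 < 0) with hW
    have h2 : ∑ p ∈ W, μ p.1 p.2 ≤ ∑ i, ∑ j, μ i j * g i j := by
      rw [hW, Finset.sum_filter, Fintype.sum_prod_type]
      refine Finset.sum_le_sum fun i _ => Finset.sum_le_sum fun j _ => ?_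
      by_cases h : μ i j < 0
      · rw [if_pos h]; nlinarith [hg1 i j, hg0 i j]
      · rw [if_neg h]; push_neg at h; exact mul_nonneg h (hg0 i j)
    have h1 := key W
    have h3 := neg_abs_le (∑ p ∈ W, μ p.1 p.2)
    linarith
  · set W := (univ : Finset (Fin a × Fin b)).filter (fun q => 0 < μ q.1 q.2) with hW
    have h2 : ∑ i, ∑ j, μ i j * g i j ≤ ∑ p ∈ W, μ p.1 p.2 := by
      rw [hW, Finset.sum_filter, Fintype.sum_prod_type]
      refine Finset.sum_le_sum fun i _ => Finset.sum_le_sum fun j _ => ?_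
      by_cases h : 0 < μ i j
      · rw [if_pos h]; nlinarith [hg1 i j, hg0 i j]
      · rw [if_neg h]; push_neg at h; exact mul_nonpos_of_nonpos_of_nonneg h (hg0 i j)
    have h1 := key W
    have h3 := le_abs_self (∑ p ∈ W, μ p.1 p.2)
    linarith

lemma beta_transpose_le {n m : ℕ} (θ : Fin n → Fin m → ℝ) :
    beta (fun j i => θ i j) ≤ beta θ := by
  refine Real.sSup_le ?_ (beta_nonneg θ)
  rintro x ⟨U, rfl⟩
  refine le_csSup (betaSet_finite θ).bddAbove
    ⟨U.map (Equiv.prodComm (Fin m) (Fin n)).toEmbedding, ?_⟩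
  rw [Finset.sum_map, Finset.sum_map]
  simp [margX, margY, mul_comm]

lemma beta_dp_aux {n m p : ℕ} (δ : Fin n → Fin m → Fin p → ℝ)
    (hnn : ∀ i j k, 0 ≤ δ i j k)
    (hci : ∀ i j k, 0 < (∑ i', ∑ k', δ i' j k') →
      δ i j k * (∑ i', ∑ k', δ i' j k') = (∑ k', δ i j k') * (∑ i', δ i' j k)) :
    beta (fun i k => ∑ j, δ i j k) ≤ beta (fun i j => ∑ k, δ i j k) := by
  classical
  have hpY0 : ∀ j, 0 ≤ ∑ i, ∑ k, δ i j k :=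
    fun j => Finset.sum_nonneg fun i _ => Finset.sum_nonneg fun k _ => hnn i j k
  have hδ0 : ∀ j, (∑ i, ∑ k, δ i j k) = 0 → ∀ i k, δ i j k = 0 := by
    intro j hj i k
    have h1 := (Finset.sum_eq_zero_iff_of_nonneg
      (fun i _ => (Finset.sum_nonneg fun k _ => hnn i j k))).mp hj i (mem_univ i)
    exact (Finset.sum_eq_zero_iff_of_nonneg (fun k _ => hnn i j k)).mp h1 k (mem_univ k)
  rw [beta]
  refine Real.sSup_le ?_ (beta_nonneg _)
  rintro x ⟨U, rfl⟩

  set A : Fin n → Fin m → ℝ := fun i j => ∑ k, δ i j k with hA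
  set B : Fin m → Fin p → ℝ := fun j k => ∑ i, δ i j k with hB
  set C : Fin n → Fin p → ℝ := fun i k => ∑ j, δ i j k with hC
  set g : Fin n → Fin m → ℝ := fun i j =>
    if (∑ i', ∑ k', δ i' j k') = 0 then 0
    else (∑ k, if (i, k) ∈ U then B j k else 0) / (∑ i', ∑ k', δ i' j k') with hg
  have hmargYA : ∀ j, margY A j = ∑ i, ∑ k, δ i j k := fun j => rfl
  have hmargXA : ∀ i, margX C i = margX A i := fun i => Finset.sum_comm
  have hmargYC : ∀ k, margY C k = ∑ j, B j k := fun k => Finset.sum_comm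
  have hmargXB : ∀ j, margX B j = ∑ i, ∑ k, δ i j k := fun j => Finset.sum_comm
  have hg0 : ∀ i j, 0 ≤ g i j := by
    intro i j
    rw [hg]; dsimp only
    split
    · exact le_refl 0
    · exact div_nonneg (Finset.sum_nonneg fun k _ => by
        split
        · exact Finset.sum_nonneg fun i' _ => hnn i' j k
        · exact le_refl 0) (hpY0 j)
  have hg1 : ∀ i j, g i j ≤ 1 := by
    intro i j
    rw [hg]; dsimp only
    split
    · exact zero_le_one
    · rename_i hne
      have hpos : 0 < ∑ i', ∑ k', δ i' j k' := lt_of_le_of_ne (hpY0 j) (Ne.symm hne)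
      rw [div_le_one hpos]
      calc (∑ k, if (i, k) ∈ U then B j k else 0) ≤ ∑ k, B j k := by
            refine Finset.sum_le_sum fun k _ => ?_
            split
            · exact le_refl _
            · exact Finset.sum_nonneg fun i' _ => hnn i' j k
        _ = ∑ i', ∑ k', δ i' j k' := hmargXB j
  have key : (∑ p ∈ U, C p.1 p.2) - (∑ p ∈ U, margX C p.1 * margY C p.2)
      = ∑ i, ∑ j, (A i j - margX A i * margY A j) * g i j := by
    rw [sum_mem_ite U (fun i k => C i k), sum_mem_ite U (fun i k => margX C i * margY C k),
      ← Finset.sum_sub_distrib]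
    simp only [← Finset.sum_sub_distrib]
    refine Finset.sum_congr rfl fun i _ => ?_
    have step1 : ∀ k, ((if (i, k) ∈ U then C i k else 0)
        - (if (i, k) ∈ U then margX C i * margY C k else 0))
        = ∑ j, (if (i, k) ∈ U then δ i j k - margX A i * B j k else 0) := by
      intro k
      by_cases h : (i, k) ∈ U
      · simp only [h, if_true]
        rw [Finset.sum_sub_distrib, ← Finset.mul_sum, hmargXA i, hmargYC k]
      · simp [h]
    rw [Finset.sum_congr rfl fun k _ => step1 k, Finset.sum_comm]
    refine Finset.sum_congr rfl fun j _ => ?_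
    rcases eq_or_lt_of_le (hpY0 j) with h0 | hpos
    · have hz := hδ0 j h0.symm
      have hBz : ∀ k, B j k = 0 := fun k => by
        rw [hB]; exact Finset.sum_eq_zero fun i' _ => hz i' k
      have hgz : g i j = 0 := by rw [hg]; simp [← h0]
      rw [hgz, mul_zero]
      refine Finset.sum_eq_zero fun k _ => ?_
      rw [hz i k, hBz k]
      simp
    · have hne : (∑ i', ∑ k', δ i' j k') ≠ 0 := ne_of_gt hpos
      have hδeq : ∀ k, δ i j k = A i j * B j k / (∑ i', ∑ k', δ i' j k') := by
        intro k
        rw [eq_div_iff hne]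
        exact hci i j k hpos
      have step2 : ∀ k, (if (i, k) ∈ U then δ i j k - margX A i * B j k else 0)
          = ((A i j - margX A i * margY A j) / (∑ i', ∑ k', δ i' j k'))
            * (if (i, k) ∈ U then B j k else 0) := by
        intro k
        by_cases h : (i, k) ∈ U
        · rw [if_pos h, if_pos h, hδeq k, hmargYA j]
          field_simp
        · simp [h]
      rw [Finset.sum_congr rfl fun k _ => step2 k, ← Finset.mul_sum]
      rw [hg]; dsimp only
      rw [if_neg hne]
      field_simp
  rw [key]
  exact abs_sum_mul_le_beta A g hg0 hg1

/-- Data-processing inequality for the beta-mixing coefficient: if `X` and `Z` are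
conditionally independent given `Y`, then `β(X,Z) ≤ min{β(X,Y), β(Y,Z)}`.  Here `δ` is the
joint distribution of `(X,Y,Z)` and the pairwise joint distributions are its marginals. -/
theorem beta_data_processing {n m p : ℕ} (δ : Fin n → Fin m → Fin p → ℝ)
    (hnn : ∀ i j k, 0 ≤ δ i j k) (hsum : ∑ i, ∑ j, ∑ k, δ i j k = 1)
    (hci : ∀ i j k, 0 < (∑ i', ∑ k', δ i' j k') →
      δ i j k * (∑ i', ∑ k', δ i' j k') = (∑ k', δ i j k') * (∑ i', δ i' j k)) :
    beta (fun i k => ∑ j, δ i j k) ≤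
      min (beta (fun i j => ∑ k, δ i j k)) (beta (fun j k => ∑ i, δ i j k)) := by
  refine le_min (beta_dp_aux δ hnn hci) ?_
  have hci' : ∀ k j i, 0 < (∑ k', ∑ i', (fun k j i => δ i j k) k' j i') →
      (fun k j i => δ i j k) k j i * (∑ k', ∑ i', (fun k j i => δ i j k) k' j i')
        = (∑ i', (fun k j i => δ i j k) k j i') * (∑ k', (fun k j i => δ i j k) k' j i) := by
    intro k j i hpos
    simp only at hpos ⊢
    have hs : (∑ k', ∑ i', δ i' j k') = ∑ i', ∑ k', δ i' j k' := Finset.sum_comm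
    rw [hs] at hpos ⊢
    rw [hci i j k hpos, mul_comm]
  calc beta (fun i k => ∑ j, δ i j k)
      ≤ beta (fun k i => ∑ j, δ i j k) := beta_transpose_le (fun k i => ∑ j, δ i j k)
    _ ≤ beta (fun k j => ∑ i, δ i j k) :=
        beta_dp_aux (fun k j i => δ i j k) (fun k j i => hnn i j k) hci'
    _ ≤ beta (fun j k => ∑ i, δ i j k) := beta_transpose_le (fun j k => ∑ i, δ i j k)
end

section
/- Data-processing inequality for phi-mixing: if X and Z are conditionally independent given Y, then φ(X|Z) ≤ min{ φ(X|Y), φ(Y|Z) } and φ(Z|X) ≤ min{ φ(Z|Y), φ(Y|X) }. -/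
open Finset

lemma phiSet_bdd {n m : ℕ} (θ : Fin n → Fin m → ℝ) (hnn : ∀ i j, 0 ≤ θ i j)
    (hsum : ∑ i, ∑ j, θ i j = 1) :
    BddAbove {x : ℝ | ∃ (S : Finset (Fin n)) (T : Finset (Fin m)),
      0 < PY θ T ∧ x = |Pjoint θ S T / PY θ T - PX θ S|} := by
  refine ⟨1, fun x hx => ?_⟩
  obtain ⟨S, T, hT, rfl⟩ := hx
  have h1 : 0 ≤ Pjoint θ S T :=
    Finset.sum_nonneg fun i _ => Finset.sum_nonneg fun j _ => hnn i j
  have h2 : Pjoint θ S T ≤ PY θ T := by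
    unfold Pjoint PY margY
    rw [Finset.sum_comm]
    exact Finset.sum_le_sum fun j _ =>
      Finset.sum_le_sum_of_subset_of_nonneg (Finset.subset_univ S) fun i _ _ => hnn i j
  have h3 : 0 ≤ PX θ S := by
    unfold PX margX
    exact Finset.sum_nonneg fun i _ => Finset.sum_nonneg fun j _ => hnn i j
  have h4 : PX θ S ≤ 1 := by
    rw [← hsum]
    unfold PX margX
    exact Finset.sum_le_sum_of_subset_of_nonneg (Finset.subset_univ S)
      fun i _ _ => Finset.sum_nonneg fun j _ => hnn i j
  have hq0 : 0 ≤ Pjoint θ S T / PY θ T := div_nonneg h1 hT.le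
  have hq1 : Pjoint θ S T / PY θ T ≤ 1 := (div_le_one hT).mpr h2
  rw [abs_le]
  constructor <;> linarith

lemma le_phi {n m : ℕ} (θ : Fin n → Fin m → ℝ) (hnn : ∀ i j, 0 ≤ θ i j)
    (hsum : ∑ i, ∑ j, θ i j = 1) (S : Finset (Fin n)) (T : Finset (Fin m))
    (hT : 0 < PY θ T) : |Pjoint θ S T / PY θ T - PX θ S| ≤ phi θ :=
  le_csSup (phiSet_bdd θ hnn hsum) ⟨S, T, hT, rfl⟩

lemma phi_nonneg {n m : ℕ} (θ : Fin n → Fin m → ℝ) (hnn : ∀ i j, 0 ≤ θ i j)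
    (hsum : ∑ i, ∑ j, θ i j = 1) : 0 ≤ phi θ := by
  have hT : 0 < PY θ univ := by
    have h : PY θ univ = 1 := by
      unfold PY margY; rw [Finset.sum_comm]; exact hsum
    rw [h]; norm_num
  have h := le_phi θ hnn hsum ∅ univ hT
  simpa [Pjoint, PX] using h

/-- The `Y`-marginal of a triple joint distribution. -/
noncomputable def pY3 {n m p : ℕ} (δ : Fin n → Fin m → Fin p → ℝ) (j : Fin m) : ℝ :=
  ∑ i, ∑ k, δ i j k

lemma key {n m p : ℕ} (δ : Fin n → Fin m → Fin p → ℝ)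
    (hnn : ∀ i j k, 0 ≤ δ i j k) (hsum : ∑ i, ∑ j, ∑ k, δ i j k = 1)
    (hci : ∀ i j k, 0 < (∑ i', ∑ k', δ i' j k') →
      δ i j k * (∑ i', ∑ k', δ i' j k') = (∑ k', δ i j k') * (∑ i', δ i' j k)) :
    phi (fun i k => ∑ j, δ i j k) ≤
      min (phi (fun i j => ∑ k, δ i j k)) (phi (fun j k => ∑ i, δ i j k)) := by
  -- basic facts about the three pairwise marginals
  have hXYnn : ∀ i j, 0 ≤ (fun i j => ∑ k, δ i j k) i j :=
    fun i j => Finset.sum_nonneg fun k _ => hnn i j k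
  have hYZnn : ∀ j k, 0 ≤ (fun j k => ∑ i, δ i j k) j k :=
    fun j k => Finset.sum_nonneg fun i _ => hnn i j k
  have hXYsum : ∑ i, ∑ j, (fun i j => ∑ k, δ i j k) i j = 1 := hsum
  have hYZsum : ∑ j, ∑ k, (fun j k => ∑ i, δ i j k) j k = 1 := by
    have h1 : (∑ j, ∑ k, ∑ i, δ i j k) = ∑ j, ∑ i, ∑ k, δ i j k :=
      Finset.sum_congr rfl fun j _ => Finset.sum_comm
    simpa [h1, Finset.sum_comm (f := fun j i => ∑ k, δ i j k)] using hsum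
  -- pY3 facts
  have hpj_nn : ∀ j, 0 ≤ pY3 δ j :=
    fun j => Finset.sum_nonneg fun i _ => Finset.sum_nonneg fun k _ => hnn i j k
  have hpj0 : ∀ j, pY3 δ j = 0 → ∀ i k, δ i j k = 0 := by
    intro j h i k
    have h' := (Finset.sum_eq_zero_iff_of_nonneg
      (fun i _ => Finset.sum_nonneg fun k _ => hnn i j k)).mp h i (mem_univ i)
    exact (Finset.sum_eq_zero_iff_of_nonneg fun k _ => hnn i j k).mp h' k (mem_univ k)
  have hpj_as_k : ∀ j, pY3 δ j = ∑ k, ∑ i, δ i j k := fun j => Finset.sum_comm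
  have hφXY := phi_nonneg _ hXYnn hXYsum
  have hφYZ := phi_nonneg _ hYZnn hYZsum
  rw [phi]
  refine Real.sSup_le ?_ (le_min hφXY hφYZ)
  rintro x ⟨S, T, hT, rfl⟩
  set D := PY (fun i k => ∑ j, δ i j k) T with hDdef
  have hD : 0 < D := hT
  set A : Fin m → ℝ := fun j => ∑ i ∈ S, ∑ k, δ i j k with hA
  set B : Fin m → ℝ := fun j => ∑ k ∈ T, ∑ i, δ i j k with hB
  set α : Fin m → ℝ := fun j => A j / pY3 δ j with hα
  set Q : Fin m → ℝ := fun j => B j / D with hQ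
  have hA_nn : ∀ j, 0 ≤ A j :=
    fun j => Finset.sum_nonneg fun i _ => Finset.sum_nonneg fun k _ => hnn i j k
  have hB_nn : ∀ j, 0 ≤ B j :=
    fun j => Finset.sum_nonneg fun k _ => Finset.sum_nonneg fun i _ => hnn i j k
  have hA_le : ∀ j, A j ≤ pY3 δ j := fun j =>
    Finset.sum_le_sum_of_subset_of_nonneg (Finset.subset_univ S)
      fun i _ _ => Finset.sum_nonneg fun k _ => hnn i j k
  have hB_le : ∀ j, B j ≤ pY3 δ j := fun j => by
    rw [hpj_as_k]
    exact Finset.sum_le_sum_of_subset_of_nonneg (Finset.subset_univ T)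
      fun k _ _ => Finset.sum_nonneg fun i _ => hnn i j k
  have hα_nn : ∀ j, 0 ≤ α j := fun j => div_nonneg (hA_nn j) (hpj_nn j)
  have hα_le1 : ∀ j, α j ≤ 1 := by
    intro j
    rcases eq_or_lt_of_le (hpj_nn j) with h | h
    · simp [hα, ← h]
    · exact (div_le_one h).mpr (hA_le j)
  have hQ_nn : ∀ j, 0 ≤ Q j := fun j => div_nonneg (hB_nn j) hD.le
  have hApj : ∀ j, A j = α j * pY3 δ j := by
    intro j
    rcases eq_or_lt_of_le (hpj_nn j) with h | h
    · have : A j = 0 := Finset.sum_eq_zero fun i _ =>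
        Finset.sum_eq_zero fun k _ => hpj0 j h.symm i k
      simp [this, hα]
    · rw [hα]; field_simp
  have hrect : ∀ j, (∑ i ∈ S, ∑ k ∈ T, δ i j k) = α j * B j := by
    intro j
    rcases eq_or_lt_of_le (hpj_nn j) with h | h
    · have hz : ∀ i k, δ i j k = 0 := hpj0 j h.symm
      have hA0 : A j = 0 := Finset.sum_eq_zero fun i _ =>
        Finset.sum_eq_zero fun k _ => hz i k
      simp [hα, hA0, Finset.sum_eq_zero fun i (_ : i ∈ S) =>
        Finset.sum_eq_zero fun k (_ : k ∈ T) => hz i k]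
    · have hmul : (∑ i ∈ S, ∑ k ∈ T, δ i j k) * pY3 δ j = A j * B j := by
        calc (∑ i ∈ S, ∑ k ∈ T, δ i j k) * pY3 δ j
            = ∑ i ∈ S, ∑ k ∈ T, δ i j k * pY3 δ j := by
              rw [Finset.sum_mul]
              exact Finset.sum_congr rfl fun i _ => Finset.sum_mul _ _ _
          _ = ∑ i ∈ S, ∑ k ∈ T, (∑ k', δ i j k') * (∑ i', δ i' j k) :=
              Finset.sum_congr rfl fun i _ => Finset.sum_congr rfl fun k _ => hci i j k h
          _ = A j * B j := (Finset.sum_mul_sum _ _ _ _).symm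
      rw [hα, div_mul_eq_mul_div, eq_div_iff (ne_of_gt h)]
      exact hmul
  -- expressing the three quantities as sums over j
  have hPjoint : Pjoint (fun i k => ∑ j, δ i j k) S T = ∑ j, α j * B j := by
    unfold Pjoint
    have h1 : (∑ i ∈ S, ∑ k ∈ T, ∑ j, δ i j k) = ∑ i ∈ S, ∑ j, ∑ k ∈ T, δ i j k :=
      Finset.sum_congr rfl fun i _ => Finset.sum_comm
    rw [h1, Finset.sum_comm]
    exact Finset.sum_congr rfl fun j _ => hrect j
  have hDsum : D = ∑ j, B j := by
    rw [hDdef]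
    unfold PY margY
    have h1 : (∑ k ∈ T, ∑ i, ∑ j, δ i j k) = ∑ k ∈ T, ∑ j, ∑ i, δ i j k :=
      Finset.sum_congr rfl fun k _ => Finset.sum_comm
    rw [h1, Finset.sum_comm]
  have hPXsum : PX (fun i k => ∑ j, δ i j k) S = ∑ j, A j := by
    unfold PX margX
    have h1 : (∑ i ∈ S, ∑ k, ∑ j, δ i j k) = ∑ i ∈ S, ∑ j, ∑ k, δ i j k :=
      Finset.sum_congr rfl fun i _ => Finset.sum_comm
    rw [h1, Finset.sum_comm]
  have hQsum : ∑ j, Q j = 1 := by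
    rw [hQ]
    simp only
    rw [← Finset.sum_div, ← hDsum, div_self (ne_of_gt hD)]
  -- the main difference, in two forms
  have hdiff : Pjoint (fun i k => ∑ j, δ i j k) S T / D - PX (fun i k => ∑ j, δ i j k) S
      = ∑ j, α j * (Q j - pY3 δ j) := by
    rw [hPjoint, hPXsum, Finset.sum_div]
    rw [← Finset.sum_sub_distrib]
    refine Finset.sum_congr rfl fun j _ => ?_
    rw [hApj j, hQ]
    ring
  refine le_min ?_ ?_
  · -- bound by phi(X|Y)
    have hdiff2 : Pjoint (fun i k => ∑ j, δ i j k) S T / D - PX (fun i k => ∑ j, δ i j k) S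
        = ∑ j, Q j * (α j - PX (fun i k => ∑ j, δ i j k) S) := by
      have h2 : ∑ j, Q j * (α j - PX (fun i k => ∑ j, δ i j k) S)
          = (∑ j, Q j * α j) - (∑ j, Q j) * PX (fun i k => ∑ j, δ i j k) S := by
        rw [Finset.sum_mul, ← Finset.sum_sub_distrib]
        exact Finset.sum_congr rfl fun j _ => by ring
      rw [h2, hQsum, one_mul, hPjoint, Finset.sum_div]
      congr 1
      exact Finset.sum_congr rfl fun j _ => by rw [hQ]; ring
    rw [hdiff2]
    have hterm : ∀ j, Q j * |α j - PX (fun i k => ∑ j, δ i j k) S|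
        ≤ Q j * phi (fun i j => ∑ k, δ i j k) := by
      intro j
      rcases eq_or_lt_of_le (hQ_nn j) with h | h
      · rw [← h]; simp
      · have hBpos : 0 < B j := by
          by_contra hc
          push_neg at hc
          have : B j = 0 := le_antisymm hc (hB_nn j)
          rw [hQ] at h; simp only at h; rw [this] at h; simp at h
        have hpj_pos : 0 < pY3 δ j := lt_of_lt_of_le hBpos (hB_le j)
        have hPYj : PY (fun i j => ∑ k, δ i j k) {j} = pY3 δ j := by
          simp [PY, margY, pY3]
        have hPj : Pjoint (fun i j => ∑ k, δ i j k) S {j} = A j := by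
          simp [Pjoint, hA]
        have hPXeq : PX (fun i j => ∑ k, δ i j k) S = PX (fun i k => ∑ j, δ i j k) S := by
          unfold PX margX
          exact Finset.sum_congr rfl fun i _ => Finset.sum_comm
        have hle := le_phi _ hXYnn hXYsum S {j} (by rw [hPYj]; exact hpj_pos)
        rw [hPYj, hPj, hPXeq] at hle
        have hαj : α j = A j / pY3 δ j := rfl
        rw [← hαj] at hle
        exact mul_le_mul_of_nonneg_left hle (hQ_nn j)
    calc |∑ j, Q j * (α j - PX (fun i k => ∑ j, δ i j k) S)|
        ≤ ∑ j, |Q j * (α j - PX (fun i k => ∑ j, δ i j k) S)| :=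
          Finset.abs_sum_le_sum_abs _ _
      _ = ∑ j, Q j * |α j - PX (fun i k => ∑ j, δ i j k) S| :=
          Finset.sum_congr rfl fun j _ => by rw [abs_mul, abs_of_nonneg (hQ_nn j)]
      _ ≤ ∑ j, Q j * phi (fun i j => ∑ k, δ i j k) :=
          Finset.sum_le_sum fun j _ => hterm j
      _ = phi (fun i j => ∑ k, δ i j k) := by rw [← Finset.sum_mul, hQsum, one_mul]
  · -- bound by phi(Y|Z)
    have hJ : ∀ J : Finset (Fin m),
        |∑ j ∈ J, (Q j - pY3 δ j)| ≤ phi (fun j k => ∑ i, δ i j k) := by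
      intro J
      have hPYT : PY (fun j k => ∑ i, δ i j k) T = D := by
        rw [hDdef]
        unfold PY margY
        exact Finset.sum_congr rfl fun k _ => Finset.sum_comm
      have hPjointJ : Pjoint (fun j k => ∑ i, δ i j k) J T / PY (fun j k => ∑ i, δ i j k) T
          = ∑ j ∈ J, Q j := by
        rw [hPYT]
        unfold Pjoint
        rw [Finset.sum_div]
      have hPXJ : PX (fun j k => ∑ i, δ i j k) J = ∑ j ∈ J, pY3 δ j := by
        unfold PX margX
        exact Finset.sum_congr rfl fun j _ => (hpj_as_k j).symm
      have h := le_phi _ hYZnn hYZsum J T (by rw [hPYT]; exact hD)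
      rw [hPjointJ, hPXJ, ← Finset.sum_sub_distrib] at h
      exact h
    rw [hdiff]
    rw [abs_le]
    constructor
    · -- lower bound
      have hF : ∑ j, (pY3 δ j - Q j) * α j ≤
          ∑ j ∈ univ.filter (fun j => Q j ≤ pY3 δ j), (pY3 δ j - Q j) := by
        rw [Finset.sum_filter]
        refine Finset.sum_le_sum fun j _ => ?_
        split_ifs with h
        · exact mul_le_of_le_one_right (by linarith) (hα_le1 j)
        · push_neg at h
          nlinarith [hα_nn j]
      have h2 := hJ (univ.filter (fun j => Q j ≤ pY3 δ j))
      have h3 : -(∑ j ∈ univ.filter (fun j => Q j ≤ pY3 δ j), (Q j - pY3 δ j))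
          ≤ |∑ j ∈ univ.filter (fun j => Q j ≤ pY3 δ j), (Q j - pY3 δ j)| := neg_le_abs _
      have h4 : ∑ j ∈ univ.filter (fun j => Q j ≤ pY3 δ j), (pY3 δ j - Q j)
          = -(∑ j ∈ univ.filter (fun j => Q j ≤ pY3 δ j), (Q j - pY3 δ j)) := by
        rw [← Finset.sum_neg_distrib]
        exact Finset.sum_congr rfl fun j _ => by ring
      have h5 : ∑ j, (pY3 δ j - Q j) * α j = -(∑ j, α j * (Q j - pY3 δ j)) := by
        rw [← Finset.sum_neg_distrib]
        exact Finset.sum_congr rfl fun j _ => by ring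
      rw [h5] at hF
      rw [h4] at hF
      linarith
    · -- upper bound
      have hF : ∑ j, α j * (Q j - pY3 δ j) ≤
          ∑ j ∈ univ.filter (fun j => pY3 δ j ≤ Q j), (Q j - pY3 δ j) := by
        rw [Finset.sum_filter]
        refine Finset.sum_le_sum fun j _ => ?_
        split_ifs with h
        · exact mul_le_of_le_one_left (by linarith) (hα_le1 j)
        · push_neg at h
          nlinarith [hα_nn j]
      have h2 := hJ (univ.filter (fun j => pY3 δ j ≤ Q j))
      have h3 : ∑ j ∈ univ.filter (fun j => pY3 δ j ≤ Q j), (Q j - pY3 δ j)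
          ≤ |∑ j ∈ univ.filter (fun j => pY3 δ j ≤ Q j), (Q j - pY3 δ j)| := le_abs_self _
      linarith

/-- Data-processing inequality for the phi-mixing coefficient: if `X` and `Z` are
conditionally independent given `Y`, then `φ(X|Z) ≤ min{φ(X|Y), φ(Y|Z)}` and
`φ(Z|X) ≤ min{φ(Z|Y), φ(Y|X)}`.  Here `δ` is the joint distribution of `(X,Y,Z)`; for a
pair `(U,V)`, `phi θUV = φ(U|V)` where `θUV` is the corresponding pairwise marginal. -/
theorem phi_data_processing {n m p : ℕ} (δ : Fin n → Fin m → Fin p → ℝ)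
    (hnn : ∀ i j k, 0 ≤ δ i j k) (hsum : ∑ i, ∑ j, ∑ k, δ i j k = 1)
    (hci : ∀ i j k, 0 < (∑ i', ∑ k', δ i' j k') →
      δ i j k * (∑ i', ∑ k', δ i' j k') = (∑ k', δ i j k') * (∑ i', δ i' j k)) :
    phi (fun i k => ∑ j, δ i j k) ≤
      min (phi (fun i j => ∑ k, δ i j k)) (phi (fun j k => ∑ i, δ i j k)) ∧
    phi (fun k i => ∑ j, δ i j k) ≤
      min (phi (fun k j => ∑ i, δ i j k)) (phi (fun j i => ∑ k, δ i j k)) := by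
  constructor
  · exact key δ hnn hsum hci
  · have hsum' : ∑ k, ∑ j, ∑ i, (fun (k : Fin p) (j : Fin m) (i : Fin n) => δ i j k) k j i
        = 1 := by
      simp only
      have h1 : (∑ k, ∑ j, ∑ i, δ i j k) = ∑ k, ∑ i, ∑ j, δ i j k :=
        Finset.sum_congr rfl fun k _ => Finset.sum_comm
      have h2 : (∑ k, ∑ i, ∑ j, δ i j k) = ∑ i, ∑ k, ∑ j, δ i j k := Finset.sum_comm
      have h3 : (∑ i, ∑ k, ∑ j, δ i j k) = ∑ i, ∑ j, ∑ k, δ i j k :=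
        Finset.sum_congr rfl fun i _ => Finset.sum_comm
      rw [h1, h2, h3, hsum]
    have hci' : ∀ (k : Fin p) (j : Fin m) (i : Fin n),
        0 < (∑ k', ∑ i', δ i' j k') →
        δ i j k * (∑ k', ∑ i', δ i' j k') = (∑ i', δ i' j k) * (∑ k', δ i j k') := by
      intro k j i h
      have hpos : 0 < (∑ i', ∑ k', δ i' j k') := by
        rwa [Finset.sum_comm] at h
      have hc := hci i j k hpos
      calc δ i j k * (∑ k', ∑ i', δ i' j k')
          = δ i j k * (∑ i', ∑ k', δ i' j k') := by rw [Finset.sum_comm]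
        _ = (∑ k', δ i j k') * (∑ i', δ i' j k) := hc
        _ = (∑ i', δ i' j k) * (∑ k', δ i j k') := mul_comm _ _
    exact key (fun k j i => δ i j k) (fun k j i => hnn i j k) hsum' hci'
end

section
/- Suppose (X_i, Y_i), i = 1,2,…, are i.i.d. samples drawn from a joint probability measure θ on ℝ² that is absolutely continuous with respect to two-dimensional Lebesgue measure. For each l, let θ̂_l = (1/l)·Σ_{i=1}^l δ_{(X_i,Y_i)} be the empirical joint measure, and let β̂_l denote the total variation distance between θ̂_l and the product of its two coordinate marginals. Then almost surely β̂_l = (l−1)/l for every l, and hence β̂_l → 1 as l → ∞, regardless of the true value of the beta-mixing coefficient of θ. -/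
open MeasureTheory Filter

/-- The total variation distance between a measure `θ` on `ℝ²` and the product of its two
coordinate marginals: `sup_E |θ(E) − (μ×ν)(E)|` over Borel sets `E ⊆ ℝ²`; this is the
beta-mixing coefficient of `θ`. -/
noncomputable def betaTV (θ : Measure (ℝ × ℝ)) : ℝ :=
  sSup {x : ℝ | ∃ E : Set (ℝ × ℝ), MeasurableSet E ∧
    x = |(θ E).toReal - (((θ.map Prod.fst).prod (θ.map Prod.snd)) E).toReal|}

/-- The empirical measure `θ̂_l = (1/l)·Σ_{i<l} δ_{Z i ω}` of the first `l` samples. -/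
noncomputable def empiricalMeasure (Z : ℕ → ℝ × ℝ) (l : ℕ) : Measure (ℝ × ℝ) :=
  (l : ENNReal)⁻¹ • ∑ i ∈ Finset.range l, Measure.dirac (Z i)

/-!
Almost surely the sample points have pairwise distinct first coordinates and pairwise distinct
second coordinates, because two independent draws from an atomless law coincide with probability
zero. For such points the product of the empirical marginals gives mass `l⁻²` to each of the `l²`
points `(xᵢ, yⱼ)`. Its diagonal part is `θ̂_l / l`, which bounds the total variation distance by
`1 - 1/l`, and the set of sample points, of `θ̂_l`-mass `1` and product mass `1/l`, attains it.
-/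

open scoped ENNReal

lemma MeasureTheory.Measure.finset_sum_prod {α β ι : Type*} [MeasurableSpace α]
    [MeasurableSpace β] (s : Finset ι) (μ : ι → Measure α) [∀ i, IsFiniteMeasure (μ i)]
    (ν : Measure β) [SFinite ν] :
    (∑ i ∈ s, μ i).prod ν = ∑ i ∈ s, (μ i).prod ν := by
  classical
  induction s using Finset.induction_on with
  | empty => simp
  | insert a s ha ih => rw [Finset.sum_insert ha, Finset.sum_insert ha, Measure.add_prod, ih]

lemma MeasureTheory.Measure.QuasiMeasurePreserving.nullSingletonClass_map {α β : Type*}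
    [MeasurableSpace α] [MeasurableSpace β] [MeasurableSingletonClass β] {θ μ : Measure α}
    {ν : Measure β} [NullSingletonClass ν] {f : α → β} (hf : Measure.QuasiMeasurePreserving f μ ν)
    (hθ : θ ≪ μ) : NullSingletonClass (θ.map f) :=
  ⟨fun y => by
    rw [Measure.map_apply hf.measurable (measurableSet_singleton y)]
    exact hθ (hf.preimage_null (measure_singleton y))⟩

namespace MeasureTheory

variable {α : Type*} [MeasurableSpace α] {θ π : Measure α} [IsProbabilityMeasure θ]
  [IsProbabilityMeasure π] {c : ℝ≥0∞}

lemma toReal_le_one_of_smul_le (h : c • θ ≤ π) : c.toReal ≤ 1 := by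
  have := h Set.univ
  simp only [Measure.smul_apply, measure_univ, smul_eq_mul, mul_one] at this
  exact ENNReal.toReal_le_of_le_ofReal zero_le_one (by simpa using this)

lemma measureReal_sub_measureReal_le_of_smul_le (h : c • θ ≤ π) (s : Set α) :
    θ.real s - π.real s ≤ 1 - c.toReal := by
  have hc := toReal_le_one_of_smul_le h
  have hπ : c.toReal * θ.real s ≤ π.real s := by
    have := h s
    rw [Measure.smul_apply, smul_eq_mul] at this
    rw [measureReal_def, measureReal_def, ← ENNReal.toReal_mul]
    exact ENNReal.toReal_mono (measure_ne_top π s) this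
  nlinarith [measureReal_le_one (μ := θ) (s := s), measureReal_nonneg (μ := θ) (s := s)]

lemma abs_measureReal_sub_measureReal_le_of_smul_le (h : c • θ ≤ π) {s : Set α}
    (hs : MeasurableSet s) : |θ.real s - π.real s| ≤ 1 - c.toReal := by
  refine abs_sub_le_iff.2 ⟨measureReal_sub_measureReal_le_of_smul_le h s, ?_⟩
  have := measureReal_sub_measureReal_le_of_smul_le h sᶜ
  rw [probReal_compl_eq_one_sub hs, probReal_compl_eq_one_sub hs] at this
  linarith

end MeasureTheory

noncomputable def prodMarginals {α β : Type*} [MeasurableSpace α] [MeasurableSpace β]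
    (θ : Measure (α × β)) : Measure (α × β) :=
  (θ.map Prod.fst).prod (θ.map Prod.snd)

instance {α β : Type*} [MeasurableSpace α] [MeasurableSpace β] (θ : Measure (α × β))
    [IsProbabilityMeasure θ] : IsProbabilityMeasure (prodMarginals θ) :=
  have := Measure.isProbabilityMeasure_map (μ := θ) measurable_fst.aemeasurable
  have := Measure.isProbabilityMeasure_map (μ := θ) measurable_snd.aemeasurable
  inferInstanceAs (IsProbabilityMeasure (Measure.prod _ _))

section BetaTV

variable {θ : Measure (ℝ × ℝ)} [IsProbabilityMeasure θ]

lemma betaTV_le_of_smul_le {c : ℝ≥0∞} (h : c • θ ≤ prodMarginals θ) :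
    betaTV θ ≤ 1 - c.toReal :=
  csSup_le ⟨_, ∅, .empty, rfl⟩ <| by
    rintro _ ⟨E, hE, rfl⟩
    exact abs_measureReal_sub_measureReal_le_of_smul_le h hE

lemma abs_measureReal_sub_le_betaTV {E : Set (ℝ × ℝ)} (hE : MeasurableSet E) :
    |θ.real E - (prodMarginals θ).real E| ≤ betaTV θ := by
  refine le_csSup ⟨1, ?_⟩ ⟨E, hE, rfl⟩
  rintro _ ⟨F, hF, rfl⟩
  exact (abs_measureReal_sub_measureReal_le_of_smul_le (π := prodMarginals θ) (c := 0)
    (by simp [Measure.zero_le]) hF).trans (by simp)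

end BetaTV

section Empirical

open scoped Classical

variable (z : ℕ → ℝ × ℝ) (l : ℕ)

lemma empiricalMeasure_apply (s : Set (ℝ × ℝ)) :
    empiricalMeasure z l s =
      (l : ℝ≥0∞)⁻¹ * ((Finset.range l).filter (fun i => z i ∈ s)).card := by
  simp [empiricalMeasure, Measure.dirac_apply, Set.indicator_apply]

lemma map_empiricalMeasure {β : Type*} [MeasurableSpace β] {f : ℝ × ℝ → β} (hf : Measurable f) :
    (empiricalMeasure z l).map f =
      (l : ℝ≥0∞)⁻¹ • ∑ i ∈ Finset.range l, Measure.dirac (f (z i)) := by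
  simp [empiricalMeasure, Measure.map_smul, Measure.map_finset_sum hf.aemeasurable,
    Measure.map_dirac' hf]

lemma isProbabilityMeasure_empiricalMeasure (hl : l ≠ 0) :
    IsProbabilityMeasure (empiricalMeasure z l) :=
  ⟨by simp [empiricalMeasure_apply, ENNReal.inv_mul_cancel (Nat.cast_ne_zero.2 hl)]⟩

instance : IsZeroOrProbabilityMeasure (empiricalMeasure z l) := by
  rcases eq_or_ne l 0 with rfl | hl
  · simp [empiricalMeasure]; infer_instance
  · have := isProbabilityMeasure_empiricalMeasure z l hl
    infer_instance

lemma inv_smul_empiricalMeasure_le_prodMarginals :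
    (l : ℝ≥0∞)⁻¹ • empiricalMeasure z l ≤ prodMarginals (empiricalMeasure z l) := by
  have hsnd : ∀ i ∈ Finset.range l,
      (l : ℝ≥0∞)⁻¹ • Measure.dirac (z i).2 ≤ (empiricalMeasure z l).map Prod.snd := fun i hi => by
    rw [map_empiricalMeasure z l measurable_snd]
    gcongr
    exact Finset.single_le_sum (f := fun j => Measure.dirac (z j).2)
      (fun _ _ => Measure.zero_le _) hi
  calc (l : ℝ≥0∞)⁻¹ • empiricalMeasure z l
      = (l : ℝ≥0∞)⁻¹ • ∑ i ∈ Finset.range l,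
          (Measure.dirac (z i).1).prod ((l : ℝ≥0∞)⁻¹ • Measure.dirac (z i).2) := by
        simp [empiricalMeasure, Measure.prod_smul_right, Measure.dirac_prod_dirac,
          Finset.smul_sum]
    _ ≤ (l : ℝ≥0∞)⁻¹ • ∑ i ∈ Finset.range l,
          (Measure.dirac (z i).1).prod ((empiricalMeasure z l).map Prod.snd) := by
        gcongr with i hi
        exact hsnd i hi
    _ = prodMarginals (empiricalMeasure z l) := by
        rw [prodMarginals, map_empiricalMeasure z l measurable_fst, Measure.prod_smul_left,
          Measure.finset_sum_prod]

lemma map_empiricalMeasure_singleton {β : Type*} [MeasurableSpace β] [MeasurableSingletonClass β]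
    {f : ℝ × ℝ → β} (hf : Measurable f) (hinj : Function.Injective fun i => f (z i)) {k : ℕ}
    (hk : k < l) : (empiricalMeasure z l).map f {f (z k)} = (l : ℝ≥0∞)⁻¹ := by
  simp [map_empiricalMeasure z l hf, Set.indicator_apply, hinj.eq_iff, hk]

lemma empiricalMeasure_image_range (hl : l ≠ 0) :
    empiricalMeasure z l (z '' ↑(Finset.range l)) = 1 := by
  rw [empiricalMeasure_apply, Finset.filter_true_of_mem fun _ hi => Set.mem_image_of_mem z hi,
    Finset.card_range, ENNReal.inv_mul_cancel (Nat.cast_ne_zero.2 hl) (ENNReal.natCast_ne_top l)]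

lemma prodMarginals_empiricalMeasure_image_le (hx : Function.Injective fun i => (z i).1)
    (hy : Function.Injective fun i => (z i).2) :
    prodMarginals (empiricalMeasure z l) (z '' ↑(Finset.range l)) ≤ (l : ℝ≥0∞)⁻¹ := by
  rw [← Set.biUnion_of_singleton (z '' _), Set.biUnion_image]
  calc _ ≤ ∑ i ∈ Finset.range l, prodMarginals (empiricalMeasure z l) {z i} :=
        measure_biUnion_finset_le _ _
    _ = ∑ i ∈ Finset.range l, (l : ℝ≥0∞)⁻¹ * (l : ℝ≥0∞)⁻¹ := by
        refine Finset.sum_congr rfl fun i hi => ?_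
        rw [Finset.mem_range] at hi
        rw [prodMarginals, ← Prod.mk.eta (p := z i), ← Set.singleton_prod_singleton,
          Measure.prod_prod, map_empiricalMeasure_singleton z l measurable_fst hx hi,
          map_empiricalMeasure_singleton z l measurable_snd hy hi]
    _ ≤ (l : ℝ≥0∞)⁻¹ := by
        rw [Finset.sum_const, Finset.card_range, nsmul_eq_mul, ← mul_assoc]
        exact mul_le_of_le_one_left (by positivity) (ENNReal.mul_inv_le_one _)

lemma betaTV_empiricalMeasure (hx : Function.Injective fun i => (z i).1)
    (hy : Function.Injective fun i => (z i).2) (hl : l ≠ 0) :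
    betaTV (empiricalMeasure z l) = 1 - (l : ℝ)⁻¹ := by
  have := isProbabilityMeasure_empiricalMeasure z l hl
  refine le_antisymm ?_ ?_
  · simpa using betaTV_le_of_smul_le (inv_smul_empiricalMeasure_le_prodMarginals z l)
  · set E := z '' ↑(Finset.range l)
    have hπE : (prodMarginals (empiricalMeasure z l)).real E ≤ (l : ℝ)⁻¹ := by
      have := ENNReal.toReal_mono (by simp [hl])
        (prodMarginals_empiricalMeasure_image_le z l hx hy)
      rwa [ENNReal.toReal_inv, ENNReal.toReal_natCast] at this
    calc 1 - (l : ℝ)⁻¹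
        ≤ (empiricalMeasure z l).real E - (prodMarginals (empiricalMeasure z l)).real E := by
          rw [measureReal_def, empiricalMeasure_image_range z l hl, ENNReal.toReal_one]
          linarith
      _ ≤ _ := le_abs_self _
      _ ≤ _ := abs_measureReal_sub_le_betaTV ((Finset.finite_toSet _).image z).measurableSet

end Empirical

namespace ProbabilityTheory

variable {Ω α β : Type*} [MeasurableSpace Ω] [MeasurableSpace α] [MeasurableSpace β]
  {P : Measure Ω} [IsFiniteMeasure P]

lemma IndepFun.ae_ne [MeasurableEq β] {X Y : Ω → β}
    (h : IndepFun X Y P) (hX : AEMeasurable X P) (hY : AEMeasurable Y P)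
    [NullSingletonClass (P.map Y)] : ∀ᵐ ω ∂P, X ω ≠ Y ω := by
  have hdiag : (P.map X).prod (P.map Y) (Set.diagonal β) = 0 := by
    rw [Measure.measure_prod_null measurableSet_diagonal]
    exact Eventually.of_forall fun x => by simp [Set.preimage, Set.diagonal]
  refine ae_of_ae_map (p := fun q => q.1 ≠ q.2) (hX.prodMk hY) ?_
  rw [(indepFun_iff_map_prod_eq_prod_map_map hX hY).1 h]
  exact measure_eq_zero_iff_ae_notMem.1 hdiag

lemma ae_injective_of_iIndepFun [MeasurableEq β] {ι : Type*} [Countable ι] {Z : ι → Ω → α}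
    (hmeas : ∀ i, Measurable (Z i)) (hindep : iIndepFun Z P) {θ : Measure α}
    (hdist : ∀ i, P.map (Z i) = θ) {f : α → β} (hf : Measurable f)
    [NullSingletonClass (θ.map f)] : ∀ᵐ ω ∂P, Function.Injective fun i => f (Z i ω) := by
  have hne : ∀ i j, ∀ᵐ ω ∂P, f (Z i ω) = f (Z j ω) → i = j := fun i j => by
    rcases eq_or_ne i j with rfl | hij
    · exact Eventually.of_forall fun _ _ => rfl
    have : NullSingletonClass (P.map (f ∘ Z j)) := by
      rw [← Measure.map_map hf (hmeas j), hdist]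
      infer_instance
    filter_upwards [((hindep.indepFun hij).comp hf hf).ae_ne (hf.comp (hmeas i)).aemeasurable
      (hf.comp (hmeas j)).aemeasurable] with ω hω h using absurd h hω
  filter_upwards [ae_all_iff.2 fun i => ae_all_iff.2 (hne i)] with ω hω i j using hω i j

end ProbabilityTheory

theorem empirical_beta_is_inconsistent_general
    {Ω : Type*} [MeasurableSpace Ω] (P : Measure Ω) [IsProbabilityMeasure P]
    (θ : Measure (ℝ × ℝ)) (hac : θ ≪ volume)
    (Z : ℕ → Ω → ℝ × ℝ) (hmeas : ∀ i, Measurable (Z i))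
    (hindep : ProbabilityTheory.iIndepFun Z P)
    (hdist : ∀ i, P.map (Z i) = θ) :
    ∀ᵐ ω ∂P,
      (∀ l : ℕ, 1 ≤ l →
        betaTV (empiricalMeasure (fun i => Z i ω) l) = ((l : ℝ) - 1) / l) ∧
      Tendsto (fun l : ℕ => betaTV (empiricalMeasure (fun i => Z i ω) l))
        atTop (nhds 1) := by
  have := Measure.quasiMeasurePreserving_fst.nullSingletonClass_map hac
  have := Measure.quasiMeasurePreserving_snd.nullSingletonClass_map hac
  filter_upwards [ProbabilityTheory.ae_injective_of_iIndepFun hmeas hindep hdist measurable_fst,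
    ProbabilityTheory.ae_injective_of_iIndepFun hmeas hindep hdist measurable_snd] with ω hx hy
  have hβ (l : ℕ) (hl : l ≠ 0) := betaTV_empiricalMeasure (fun i => Z i ω) l hx hy hl
  refine ⟨fun l hl => by rw [hβ l (by omega), sub_div, div_self (by positivity), one_div], ?_⟩
  have hlim : Tendsto (fun l : ℕ => 1 - (l : ℝ)⁻¹) atTop (nhds 1) := by
    simpa using tendsto_const_nhds.sub (tendsto_inv_atTop_nhds_zero_nat (𝕜 := ℝ))
  exact hlim.congr' <| (eventually_ne_atTop 0).mono fun l hl => (hβ l hl).symm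

/-- If `(X_i, Y_i)` are i.i.d. samples from a joint measure `θ` on `ℝ²` that is absolutely
continuous w.r.t. two-dimensional Lebesgue measure, then almost surely the beta-mixing
coefficient `β̂_l` of the empirical joint measure equals `(l−1)/l` for every `l ≥ 1`, and
hence `β̂_l → 1`, regardless of the true beta-mixing coefficient of `θ`. -/
theorem empirical_beta_is_inconsistent
    {Ω : Type*} [MeasurableSpace Ω] (P : Measure Ω) [IsProbabilityMeasure P]
    (θ : Measure (ℝ × ℝ)) [IsProbabilityMeasure θ] (hac : θ ≪ volume)
    (Z : ℕ → Ω → ℝ × ℝ) (hmeas : ∀ i, Measurable (Z i))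
    (hindep : ProbabilityTheory.iIndepFun Z P)
    (hdist : ∀ i, P.map (Z i) = θ) :
    ∀ᵐ ω ∂P,
      (∀ l : ℕ, 1 ≤ l →
        betaTV (empiricalMeasure (fun i => Z i ω) l) = ((l : ℝ) - 1) / l) ∧
      Tendsto (fun l : ℕ => betaTV (empiricalMeasure (fun i => Z i ω) l))
        atTop (nhds 1) :=
  empirical_beta_is_inconsistent_general P θ hac Z hmeas hindep hdist
end

section
/- Let θ be a probability measure on ℝ² with coordinate marginals μ and ν, and suppose θ is absolutely continuous with respect to the product measure μ×ν, with Radon–Nikodym density f. For a Borel set T ⊆ ℝ define κ_T(x) = ∫_T (f(x,y) − 1) dν(y). Then the alpha-mixing coefficient satisfies α = sup over Borel T ⊆ ℝ of ∫_ℝ (κ_T(x))_+ dμ(x), where (x)_+ = max{x,0}. -/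
open MeasureTheory

/-!
Write `κ_T(x) = ∫_T (f(x, y) - 1) dν(y)`. Fubini and the density relation give
`θ(S × T) - μ(S) ν(T) = ∫_S κ_T dμ`, and taking `S = univ` shows `∫ κ_T dμ = 0` because `ν` is
the second marginal of `θ`. For a function of integral zero, `∫_S κ_T` and `-∫_S κ_T = ∫_{Sᶜ} κ_T`
are both bounded by `∫ (κ_T)₊`, with equality for `S = {κ_T > 0}`.
-/

section PositivePart

variable {α : Type*} [MeasurableSpace α] {μ : Measure α} {g : α → ℝ}

theorem exists_measurableSet_setIntegral_eq_integral_max_zero (hg : AEStronglyMeasurable g μ) :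
    ∃ S, MeasurableSet S ∧ ∫ x in S, g x ∂μ = ∫ x, max (g x) 0 ∂μ := by
  set g' := hg.mk g
  have hS : MeasurableSet {x | 0 < g' x} :=
    measurableSet_lt measurable_const hg.stronglyMeasurable_mk.measurable
  have hmax : (fun x => max (g' x) 0) = {x | 0 < g' x}.indicator g' := by
    ext x
    by_cases hx : 0 < g' x
    · simp [hx, hx.le]
    · simp [hx, not_lt.1 hx]
  refine ⟨_, hS, ?_⟩
  calc ∫ x in {x | 0 < g' x}, g x ∂μ = ∫ x in {x | 0 < g' x}, g' x ∂μ :=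
        integral_congr_ae (ae_restrict_of_ae hg.ae_eq_mk)
    _ = ∫ x, max (g' x) 0 ∂μ := by rw [hmax, integral_indicator hS]
    _ = ∫ x, max (g x) 0 ∂μ := integral_congr_ae (hg.ae_eq_mk.symm.fun_comp (max · 0))

theorem abs_setIntegral_le_integral_max_zero (hg : Integrable g μ) (hg0 : ∫ x, g x ∂μ = 0)
    {S : Set α} (hS : MeasurableSet S) : |∫ x in S, g x ∂μ| ≤ ∫ x, max (g x) 0 ∂μ := by
  have hle (U : Set α) : ∫ x in U, g x ∂μ ≤ ∫ x, max (g x) 0 ∂μ :=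
    (setIntegral_mono hg.integrableOn hg.pos_part.integrableOn fun x => le_max_left _ _).trans
      (setIntegral_le_integral hg.pos_part (.of_forall fun x => le_max_right _ _))
  have hsplit := integral_add_compl hS hg
  rw [abs_le]
  constructor <;> linarith [hle S, hle Sᶜ]

end PositivePart

section Density

variable {α β : Type*} [MeasurableSpace α] [MeasurableSpace β]
  {μ : Measure α} {ν : Measure β} {f : α × β → ℝ}

/-- The function `κ_T` of the paper. -/
noncomputable def densityDefect (f : α × β → ℝ) (ν : Measure β) (T : Set β) (x : α) : ℝ :=
  ∫ y in T, (f (x, y) - 1) ∂ν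

theorem integrable_densityDefect [IsFiniteMeasure μ] [IsFiniteMeasure ν]
    (hf : Integrable f (μ.prod ν)) (T : Set β) : Integrable (densityDefect f ν T) μ := by
  have hint : Integrable (fun p => f p - 1) (μ.prod (ν.restrict T)) := by
    rw [← Measure.restrict_univ (μ := μ), Measure.prod_restrict]
    exact (hf.sub (integrable_const 1)).restrict
  exact hint.integral_prod_left

theorem setIntegral_densityDefect [IsFiniteMeasure μ] [IsFiniteMeasure ν]
    {θ : Measure (α × β)} (hf : Integrable f (μ.prod ν))
    (hθ : ∀ E, MeasurableSet E → (θ E).toReal = ∫ p in E, f p ∂(μ.prod ν))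
    {S : Set α} {T : Set β} (hS : MeasurableSet S) (hT : MeasurableSet T) :
    ∫ x in S, densityDefect f ν T x ∂μ = (θ (S ×ˢ T)).toReal - (μ S).toReal * (ν T).toReal := by
  have hint : Integrable (fun p => f p - 1) ((μ.restrict S).prod (ν.restrict T)) := by
    rw [Measure.prod_restrict]
    exact (hf.sub (integrable_const 1)).restrict
  unfold densityDefect
  rw [← integral_prod _ hint, Measure.prod_restrict,
    integral_sub hf.restrict (integrable_const 1), setIntegral_const, ← hθ _ (hS.prod hT),
    measureReal_def, Measure.prod_prod, ENNReal.toReal_mul, smul_eq_mul, mul_one]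

theorem integral_densityDefect_eq_zero {θ : Measure (α × β)} [IsProbabilityMeasure θ]
    (hf : Integrable f ((θ.map Prod.fst).prod (θ.map Prod.snd)))
    (hθ : ∀ E, MeasurableSet E →
      (θ E).toReal = ∫ p in E, f p ∂((θ.map Prod.fst).prod (θ.map Prod.snd)))
    {T : Set β} (hT : MeasurableSet T) :
    ∫ x, densityDefect f (θ.map Prod.snd) T x ∂(θ.map Prod.fst) = 0 := by
  rw [← setIntegral_univ, setIntegral_densityDefect hf hθ MeasurableSet.univ hT,
    Measure.map_apply measurable_fst MeasurableSet.univ,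
    Measure.map_apply measurable_snd hT, Set.univ_prod]
  simp

end Density

theorem alpha_real_eq_sup_integral_pos_part_general
    (θ : Measure (ℝ × ℝ)) [IsProbabilityMeasure θ]
    (f : ℝ × ℝ → ℝ)
    (hf_int : Integrable f ((θ.map Prod.fst).prod (θ.map Prod.snd)))
    (hf_density : ∀ E : Set (ℝ × ℝ), MeasurableSet E →
      (θ E).toReal = ∫ p in E, f p ∂((θ.map Prod.fst).prod (θ.map Prod.snd))) :
    sSup {x : ℝ | ∃ S T : Set ℝ, MeasurableSet S ∧ MeasurableSet T ∧
        x = |(θ (S ×ˢ T)).toReal -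
              ((θ.map Prod.fst) S).toReal * ((θ.map Prod.snd) T).toReal|}
      = sSup {x : ℝ | ∃ T : Set ℝ, MeasurableSet T ∧
        x = ∫ x', max (∫ y in T, (f (x', y) - 1) ∂(θ.map Prod.snd)) 0
              ∂(θ.map Prod.fst)} := by
  apply csSup_eq_csSup_of_forall_exists_le
  · rintro _ ⟨S, T, hS, hT, rfl⟩
    refine ⟨_, ⟨T, hT, rfl⟩, ?_⟩
    rw [← setIntegral_densityDefect hf_int hf_density hS hT]
    exact abs_setIntegral_le_integral_max_zero (integrable_densityDefect hf_int T)
      (integral_densityDefect_eq_zero hf_int hf_density hT) hS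
  · rintro _ ⟨T, hT, rfl⟩
    obtain ⟨S, hS, hSpos⟩ := exists_measurableSet_setIntegral_eq_integral_max_zero
      (integrable_densityDefect hf_int T).aestronglyMeasurable
    refine ⟨_, ⟨S, T, hS, hT, rfl⟩, ?_⟩
    rw [← setIntegral_densityDefect hf_int hf_density hS hT, hSpos]
    exact le_abs_self _

/-- Let `θ` be a probability measure on `ℝ²` with coordinate marginals `μ`, `ν`, absolutely
continuous w.r.t. `μ × ν` with (real-valued) Radon–Nikodym density `f`.  With
`κ_T(x) = ∫_T (f(x,y) − 1) dν(y)`, the alpha-mixing coefficient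
`α = sup_{S,T} |θ(S×T) − μ(S)ν(T)|` satisfies `α = sup_T ∫ (κ_T(x))₊ dμ(x)`. -/
theorem alpha_real_eq_sup_integral_pos_part
    (θ : Measure (ℝ × ℝ)) [IsProbabilityMeasure θ]
    (hac : θ ≪ (θ.map Prod.fst).prod (θ.map Prod.snd))
    (f : ℝ × ℝ → ℝ) (hf_meas : Measurable f) (hf_nn : ∀ p, 0 ≤ f p)
    (hf_int : Integrable f ((θ.map Prod.fst).prod (θ.map Prod.snd)))
    (hf_density : ∀ E : Set (ℝ × ℝ), MeasurableSet E →
      (θ E).toReal = ∫ p in E, f p ∂((θ.map Prod.fst).prod (θ.map Prod.snd))) :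
    sSup {x : ℝ | ∃ S T : Set ℝ, MeasurableSet S ∧ MeasurableSet T ∧
        x = |(θ (S ×ˢ T)).toReal -
              ((θ.map Prod.fst) S).toReal * ((θ.map Prod.snd) T).toReal|}
      = sSup {x : ℝ | ∃ T : Set ℝ, MeasurableSet T ∧
        x = ∫ x', max (∫ y in T, (f (x', y) - 1) ∂(θ.map Prod.snd)) 0
              ∂(θ.map Prod.fst)} :=
  alpha_real_eq_sup_integral_pos_part_general θ f hf_int hf_density
end
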